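/- arXiv:1603.09744 — 5 statements merged into one kernel-verified Lean document; each statement's English description precedes it below -/
import Mathlib

section
/- Let a be a weak composition of length n with exactly ℓ nonzero entries, and for m ≥ 1 let 0^m×a denote the weak composition of length m+n obtained by prepending m zeros to a. Then setting x_{m+ℓ+1} = ⋯ = x_{m+n} = 0 in 𝔐_{0^m×a} yields M_{flat(a)}(x_1,…,x_{m+ℓ}), and setting x_{m+ℓ+1} = ⋯ = x_{m+n} = 0 in 𝔉_{0^m×a} yields F_{flat(a)}(x_1,…,x_{m+ℓ}). Consequently, as m → ∞ the polynomials 𝔐_{0^m×a} converge coefficientwise to the monomial quasisymmetric function M_{flat(a)} and the polynomials 𝔉_{0^m×a} converge coefficientwise to the fundamental quasisymmetric function F_{flat(a)}. -/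
open scoped Classical

namespace SlidePaper

/-- Sum of the first `i` entries of a weak composition of length `n`. -/
def psum {n : ℕ} (a : Fin n → ℕ) (i : ℕ) : ℕ :=
  ∑ j ∈ Finset.univ.filter (fun j : Fin n => (j : ℕ) < i), a j

/-- `b` dominates `a`: all partial sums of `b` are at least those of `a`. -/
def Dominates {n : ℕ} (b a : Fin n → ℕ) : Prop :=
  ∀ i : Fin (n + 1), psum a i ≤ psum b i

/-- The flattening of a weak composition: the list of its nonzero entries in order. -/
def flat {n : ℕ} (a : Fin n → ℕ) : List ℕ :=
  (List.ofFn a).filter (fun x => x ≠ 0)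

/-- `β` refines `α`: `β` splits into consecutive blocks with sums `α₁, α₂, …`. -/
def Refines (β α : List ℕ) : Prop :=
  ∃ L : List (List ℕ), L.flatten = β ∧ L.map List.sum = α

/-- All weak compositions of length `n` with entries at most `k`. -/
def wcFinset (n k : ℕ) : Finset (Fin n → ℕ) :=
  Fintype.piFinset fun _ => Finset.range (k + 1)

/-- The monomial slide polynomial `𝔐_a`. -/
noncomputable def slideM {n : ℕ} (a : Fin n → ℕ) : MvPolynomial (Fin n) ℤ :=
  ∑ b ∈ (wcFinset n (∑ i, a i)).filter (fun b => Dominates b a ∧ flat b = flat a),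
    MvPolynomial.monomial (Finsupp.equivFunOnFinite.symm b) 1

/-- The fundamental slide polynomial `𝔉_a`. -/
noncomputable def slideF {n : ℕ} (a : Fin n → ℕ) : MvPolynomial (Fin n) ℤ :=
  ∑ b ∈ (wcFinset n (∑ i, a i)).filter (fun b => Dominates b a ∧ Refines (flat b) (flat a)),
    MvPolynomial.monomial (Finsupp.equivFunOnFinite.symm b) 1

/-- A weak composition is quasi-flat if its nonzero entries occupy consecutive positions. -/
def QuasiFlat {n : ℕ} (a : Fin n → ℕ) : Prop :=
  ∀ i j l : Fin n, i ≤ j → j ≤ l → a i ≠ 0 → a l ≠ 0 → a j ≠ 0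

/-- `b` strongly dominates `a`. -/
def StronglyDominates {n : ℕ} (b a : Fin n → ℕ) : Prop :=
  Dominates b a ∧ ∀ c : Fin n → ℕ, Dominates c a → flat c = flat b → Dominates c b

/-- The exponent vector placing the parts of `α` at the positions `i`. -/
noncomputable def placeExp {n : ℕ} (α : List ℕ) (i : Fin α.length → Fin n) : Fin n →₀ ℕ :=
  ∑ t : Fin α.length, Finsupp.single (i t) (α.get t)

/-- `f` is quasisymmetric in the variables `x_1, …, x_k` (0-indexed: `x_0, …, x_{k-1}`). -/
def IsQuasisymmetricIn {n : ℕ} (k : ℕ) (f : MvPolynomial (Fin n) ℤ) : Prop :=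
  ∀ α : List ℕ, (∀ x ∈ α, 0 < x) →
    ∀ i j : Fin α.length → Fin n, StrictMono i → StrictMono j →
      (∀ t, (i t : ℕ) < k) → (∀ t, (j t : ℕ) < k) →
      MvPolynomial.coeff (placeExp α i) f = MvPolynomial.coeff (placeExp α j) f

/-- The monomial quasisymmetric polynomial `M_α(x_1, …, x_k)` inside `ℤ[x_1, …, x_n]`. -/
noncomputable def Mqs (n k : ℕ) (α : List ℕ) : MvPolynomial (Fin n) ℤ :=
  ∑ i ∈ (Finset.univ : Finset (Fin α.length → Fin n)).filter
      (fun i : Fin α.length → Fin n => StrictMono i ∧ ∀ t, (i t : ℕ) < k),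
    ∏ t : Fin α.length, (MvPolynomial.X (i t) : MvPolynomial (Fin n) ℤ) ^ α.get t

/-- The fundamental quasisymmetric polynomial `F_α(x_1, …, x_k)` inside `ℤ[x_1, …, x_n]`. -/
noncomputable def Fqs (n k : ℕ) (α : List ℕ) : MvPolynomial (Fin n) ℤ :=
  ∑ c ∈ (Finset.univ : Finset (Composition α.sum)).filter
      (fun c => Refines c.blocks α ∧ c.blocks.length ≤ k),
    Mqs n k c.blocks

/-- Place the weak composition `a` (of length `N`) at offset `k` inside length `M`. -/
def shiftComp {N : ℕ} (k M : ℕ) (a : Fin N → ℕ) : Fin M → ℕ :=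
  fun i => if h : k ≤ (i : ℕ) ∧ (i : ℕ) - k < N then a ⟨(i : ℕ) - k, h.2⟩ else 0

/-- Spread the values `g` to positions `ι` inside a weak composition of length `n`. -/
def spread {l n : ℕ} (ι : Fin l → Fin n) (g : Fin l → ℕ) : Fin n → ℕ :=
  fun i => ∑ k, if ι k = i then g k else 0

/-- The monomial quasisymmetric function `M_α` in infinitely many variables. -/
noncomputable def MqsFun (α : List ℕ) : MvPowerSeries ℕ ℤ :=
  fun d => if ∃ i : Fin α.length → ℕ, StrictMono i ∧
      d = ∑ t : Fin α.length, Finsupp.single (i t) (α.get t) then 1 else 0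

/-- The fundamental quasisymmetric function `F_α` in infinitely many variables. -/
noncomputable def FqsFun (α : List ℕ) : MvPowerSeries ℕ ℤ :=
  ∑ c ∈ (Finset.univ : Finset (Composition α.sum)).filter (fun c => Refines c.blocks α),
    MqsFun c.blocks

/-- The cells of the Young diagram of `lam` (French notation): row `r` (from the
bottom, 0-indexed) has `lam.get r` cells. -/
abbrev Cells (lam : List ℕ) := Σ r : Fin lam.length, Fin (lam.get r)

/-- A filling of `lam` with entries in `{1, …, n}` (encoded as `Fin n`) is a semistandard
Young tableau: rows weakly increase left to right, columns strictly increase bottom to top. -/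
def IsSSYT {n : ℕ} {lam : List ℕ} (T : Cells lam → Fin n) : Prop :=
  (∀ (r : Fin lam.length) (c c' : Fin (lam.get r)), c ≤ c' → T ⟨r, c⟩ ≤ T ⟨r, c'⟩) ∧
  (∀ (r r' : Fin lam.length) (c' : Fin (lam.get r')) (h : (c' : ℕ) < lam.get r),
      (r : ℕ) < (r' : ℕ) → T ⟨r, ⟨c', h⟩⟩ < T ⟨r', c'⟩)

/-- The weight of a filling: the `v`-th entry counts the occurrences of the value `v`. -/
def wtT {n : ℕ} {lam : List ℕ} (T : Cells lam → Fin n) : Fin n → ℕ :=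
  fun v => (Finset.univ.filter (fun x : Cells lam => T x = v)).card

/-- A filling is quasi-Yamanouchi if for every value `v > 1`, the leftmost occurrence of `v`
lies weakly left of some occurrence of `v - 1`. -/
def IsQY {n : ℕ} {lam : List ℕ} (T : Cells lam → Fin n) : Prop :=
  ∀ (v : Fin n) (x : Cells lam), T x = v → 0 < (v : ℕ) →
    (∀ y : Cells lam, T y = v → (x.2 : ℕ) ≤ (y.2 : ℕ)) →
    ∃ z : Cells lam, (T z : ℕ) + 1 = (v : ℕ) ∧ (x.2 : ℕ) ≤ (z.2 : ℕ)

/-- The Schur polynomial `s_lam(x_1, …, x_n)` as the generating function of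
semistandard Young tableaux. -/
noncomputable def schurPoly (n : ℕ) (lam : List ℕ) : MvPolynomial (Fin n) ℤ :=
  ∑ T ∈ (Finset.univ : Finset (Cells lam → Fin n)).filter (fun T => IsSSYT T),
    MvPolynomial.monomial (Finsupp.equivFunOnFinite.symm (wtT T)) 1

/-- One destandardization step on fillings: for some value `v` occurring in `T` whose
leftmost occurrence is strictly right of every occurrence of `v - 1`, every `v` is
decremented to `v - 1`. -/
def TabStep {n : ℕ} {lam : List ℕ} (T T' : Cells lam → Fin n) : Prop :=
  ∃ v : Fin n, 0 < (v : ℕ) ∧ (∃ x, T x = v) ∧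
    (∀ x y : Cells lam, T x = v → (T y : ℕ) + 1 = (v : ℕ) → (y.2 : ℕ) < (x.2 : ℕ)) ∧
    ∀ x : Cells lam, (T' x : ℕ) = if T x = v then (v : ℕ) - 1 else (T x : ℕ)

/-- The reading word of a set of crosses: rows are read from top to bottom, each row from
left to right, the cross in (0-indexed) row `i` and column `j` recording the letter `i + j`
(representing the simple transposition swapping `i + j` and `i + j + 1` of `{0, 1, 2, …}`). -/
def readWord (P : Finset (ℕ × ℕ)) : List ℕ :=
  ((List.range (P.sup Prod.fst + 1)).reverse).flatMap
    (fun i => ((List.range (P.sup Prod.snd + 1)).filter (fun j => decide ((i, j) ∈ P))).map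
      (fun j => i + j))

/-- The permutation `s_{i_ℓ} ⋯ s_{i_1}` associated to the word `(i_1, …, i_ℓ)`,
where `s_k` swaps `k` and `k + 1`. -/
def wordPerm (l : List ℕ) : Equiv.Perm ℕ :=
  ((l.map (fun k => Equiv.swap k (k + 1))).reverse).prod

/-- A word is reduced if no shorter word has the same product. -/
def IsReducedWord (l : List ℕ) : Prop :=
  ∀ l' : List ℕ, wordPerm l' = wordPerm l → l.length ≤ l'.length

/-- `P` is a reduced pipe dream of shape `w`: the pipes trace out `w` and no two pipes
cross more than once, equivalently the reading word of `P` is a reduced word for `w`. -/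
def IsPD (w : Equiv.Perm ℕ) (P : Finset (ℕ × ℕ)) : Prop :=
  wordPerm (readWord P) = w ∧ IsReducedWord (readWord P)

/-- `P` is a quasi-Yamanouchi pipe dream of shape `w`: for every row, the westernmost cross
is in the first column or lies weakly west of some cross in the row above. -/
def IsQPD (w : Equiv.Perm ℕ) (P : Finset (ℕ × ℕ)) : Prop :=
  IsPD w P ∧ ∀ i j : ℕ, (i, j) ∈ P → (∀ j', (i, j') ∈ P → j ≤ j') →
    (j = 0 ∨ ∃ j', (i + 1, j') ∈ P ∧ j ≤ j')

/-- One destandardization step on pipe dreams: a row with no cross in the first column,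
all of whose crosses lie strictly east of every cross in the row above, has all its
crosses moved one step northwest. -/
def PDStep (P P' : Finset (ℕ × ℕ)) : Prop :=
  ∃ r : ℕ, (∃ j, (r, j) ∈ P) ∧ (r, 0) ∉ P ∧
    (∀ j j', (r, j) ∈ P → (r + 1, j') ∈ P → j' < j) ∧
    P' = P.filter (fun p => p.1 ≠ r) ∪
      (P.filter (fun p => p.1 = r)).image (fun p => (r + 1, p.2 - 1))

/-- The number of crosses of `P` in (0-indexed) row `i`. -/
def rowWt (P : Finset (ℕ × ℕ)) (i : ℕ) : ℕ := (P.filter (fun p => p.1 = i)).card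

/-- The weight of a pipe dream, as a weak composition of length `n`. -/
def wtFin (n : ℕ) (P : Finset (ℕ × ℕ)) : Fin n → ℕ := fun i => rowWt P (i : ℕ)

/-- The flattened weight of a pipe dream: the list of nonzero row counts, bottom row first. -/
def flatWt (P : Finset (ℕ × ℕ)) : List ℕ :=
  ((List.range (P.sup Prod.fst + 1)).map (rowWt P)).filter (fun x => x ≠ 0)

/-- The Schubert polynomial of `w` in the variables `x_1, …, x_n`, as the generating
function of reduced pipe dreams of shape `w`. -/
noncomputable def SchubertPoly (n : ℕ) (w : Equiv.Perm ℕ) : MvPolynomial (Fin n) ℤ :=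
  ∑ᶠ P ∈ {P : Finset (ℕ × ℕ) | IsPD w P},
    MvPolynomial.monomial (Finsupp.equivFunOnFinite.symm (wtFin n P)) 1

/-- The Lehmer code of `w` (0-indexed): `lehmer w i` counts `j > i` with `w j < w i`. -/
noncomputable def lehmer (w : Equiv.Perm ℕ) (i : ℕ) : ℕ :=
  Set.ncard {j : ℕ | i < j ∧ w j < w i}

/-- The Lehmer code of `w` as a weak composition of length `n`. -/
noncomputable def lehmerFin (n : ℕ) (w : Equiv.Perm ℕ) : Fin n → ℕ :=
  fun i => lehmer w (i : ℕ)

/-- The number of inversions of `w`. -/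
noncomputable def invCount (w : Equiv.Perm ℕ) : ℕ :=
  Set.ncard {p : ℕ × ℕ | p.1 < p.2 ∧ w p.2 < w p.1}

/-- The largest entry of the Lehmer code of `w`. -/
noncomputable def maxLehmer (w : Equiv.Perm ℕ) : ℕ :=
  sSup (Set.range (lehmer w))

/-- The (0-indexed) position of the first descent of `w`. -/
noncomputable def firstDescent (w : Equiv.Perm ℕ) : ℕ :=
  sInf {i : ℕ | w (i + 1) < w i}

/-- `δ(w) = 1` if every position attaining `max(L(w))` is at or before the first descent,
and `δ(w) = 0` otherwise. -/
noncomputable def delta (w : Equiv.Perm ℕ) : ℤ :=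
  if ∀ i : ℕ, lehmer w i = maxLehmer w → i ≤ firstDescent w then 1 else 0

/-- `η(w) = inv(w) − max(L(w)) + δ(w) − min{i : w_i > w_{i+1}}`. -/
noncomputable def eta (w : Equiv.Perm ℕ) : ℤ :=
  (invCount w : ℤ) - (maxLehmer w : ℤ) + delta w - ((firstDescent w : ℤ) + 1)

/-- The decomposition of a list into maximal strictly increasing runs. -/
def runsStrict : List ℕ → List (List ℕ)
  | [] => []
  | x :: rest =>
    match runsStrict rest, rest with
    | r :: rs, y :: _ => if x < y then (x :: r) :: rs else [x] :: r :: rs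
    | _, _ => [[x]]

/-- The descent composition of a word: lengths of its maximal increasing runs, a new run
beginning whenever a letter is followed by a weakly smaller letter. -/
def desStrict (l : List ℕ) : List ℕ := (runsStrict l).map List.length

/-- The decomposition of a list into maximal weakly increasing runs. -/
def runsWeak : List ℕ → List (List ℕ)
  | [] => []
  | x :: rest =>
    match runsWeak rest, rest with
    | r :: rs, y :: _ => if x ≤ y then (x :: r) :: rs else [x] :: r :: rs
    | _, _ => [[x]]

/-- The descent composition of a word: the lengths of its maximal weakly increasing runs. -/
def desComp (l : List ℕ) : List ℕ := (runsWeak l).map List.length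

/-- The permutation `1^m × w`, fixing `0, …, m-1` and acting by `w` shifted by `m` above. -/
def shiftPerm (m : ℕ) (w : Equiv.Perm ℕ) : Equiv.Perm ℕ where
  toFun i := if i < m then i else w (i - m) + m
  invFun i := if i < m then i else w.symm (i - m) + m
  left_inv i := by
    dsimp only
    by_cases h : i < m
    · simp [h]
    · have h2 : ¬ (w (i - m) + m < m) := by omega
      rw [if_neg h, if_neg h2, Nat.add_sub_cancel, Equiv.symm_apply_apply]
      omega
  right_inv i := by
    dsimp only
    by_cases h : i < m
    · simp [h]
    · have h2 : ¬ (w.symm (i - m) + m < m) := by omega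
      rw [if_neg h, if_neg h2, Nat.add_sub_cancel, Equiv.apply_symm_apply]
      omega

/-- The quasi-shuffle product of two (strong) compositions, as a multiset of compositions. -/
def qShuffle : List ℕ → List ℕ → Multiset (List ℕ)
  | [], β => {β}
  | α, [] => {α}
  | a :: α, b :: β =>
      ((qShuffle α (b :: β)).map (a :: ·)) + ((qShuffle (a :: α) β).map (b :: ·)) +
        ((qShuffle α β).map ((a + b) :: ·))
termination_by α β => α.length + β.length
decreasing_by all_goals (simp only [List.length_cons]; omega)

def shuffles : List ℕ → List ℕ → Multiset (List ℕ)
  | [], B => {B}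
  | A, [] => {A}
  | x :: A, y :: B =>
      ((shuffles A (y :: B)).map (x :: ·)) + ((shuffles (x :: A) B).map (y :: ·))
termination_by A B => A.length + B.length
decreasing_by all_goals (simp only [List.length_cons]; omega)

/-- The word `(2n-1)^{a_1} (2n-3)^{a_2} ⋯ 1^{a_n}` associated to a weak composition `a`. -/
def wordA {n : ℕ} (a : Fin n → ℕ) : List ℕ :=
  (List.ofFn (fun i : Fin n => List.replicate (a i) (2 * n - 2 * (i : ℕ) - 1))).flatten

/-- The word `(2n)^{b_1} (2n-2)^{b_2} ⋯ 2^{b_n}` associated to a weak composition `b`. -/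
def wordB {n : ℕ} (b : Fin n → ℕ) : List ℕ :=
  (List.ofFn (fun i : Fin n => List.replicate (b i) (2 * n - 2 * (i : ℕ)))).flatten

/-- A list (padded with trailing zeros) dominates a weak composition of length `n`. -/
def DominatesList {n : ℕ} (l : List ℕ) (a : Fin n → ℕ) : Prop :=
  ∀ i : Fin (n + 1), psum a (i : ℕ) ≤ ((l.take (i : ℕ)).sum)

/-- The number of letters of the `A`-word (the odd letters) in the `k`-th weakly
increasing run of `C`. -/
def runCountA (C : List ℕ) (k : Fin (runsWeak C).length) : ℕ :=
  (((runsWeak C).get k).filter (fun z => z % 2 = 1)).length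

/-- The number of letters of the `B`-word (the even letters) in the `k`-th weakly
increasing run of `C`. -/
def runCountB (C : List ℕ) (k : Fin (runsWeak C).length) : ℕ :=
  (((runsWeak C).get k).filter (fun z => z % 2 = 0)).length

/-- The length of the `k`-th weakly increasing run of `C`. -/
def runLen (C : List ℕ) (k : Fin (runsWeak C).length) : ℕ :=
  ((runsWeak C).get k).length

/-- `c = bump_{(a,b)}(C)`: the unique weak composition of length `n` obtained by inserting
zero parts into `Des(C)` so that the correspondingly placed `Des_A` and `Des_B` dominate
`a` and `b`, minimal in dominance order among all such insertions. -/
def IsBumpS {n : ℕ} (a b : Fin n → ℕ) (C : List ℕ) (c : Fin n → ℕ) : Prop :=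
  ∃ ι : Fin (runsWeak C).length → Fin n, StrictMono ι ∧
    c = spread ι (runLen C) ∧
    Dominates (spread ι (runCountA C)) a ∧ Dominates (spread ι (runCountB C)) b ∧
    ∀ ι' : Fin (runsWeak C).length → Fin n, StrictMono ι' →
      Dominates (spread ι' (runCountA C)) a → Dominates (spread ι' (runCountB C)) b →
      Dominates (spread ι' (runLen C)) c

/-- The multiplicity `[c ∣ a ⧢ b]` of `c` in the slide product of `a` and `b`: the number of
shuffles `C` of the words of `a` and `b` lying in the shuffle set `SS(a,b)` with
`bump_{(a,b)}(C) = c`. -/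
noncomputable def slideMult {n : ℕ} (a b c : Fin n → ℕ) : ℕ :=
  Multiset.card ((shuffles (wordA a) (wordB b)).filter
    (fun C => DominatesList ((runsWeak C).map
        (fun r => (r.filter (fun z => z % 2 = 1)).length)) a ∧
      DominatesList ((runsWeak C).map (fun r => (r.filter (fun z => z % 2 = 0)).length)) b ∧
      IsBumpS a b C c))

/-- Membership in the quasi-shuffle set `QSS(a,b)`: a pair `(γ_a, γ_b)` of weak compositions
of a common length at most `n` with `γ_a ≥ a`, `flat(γ_a) = flat(a)`, `γ_b ≥ b`,
`flat(γ_b) = flat(b)` (after padding with trailing zeros), and all entries of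
`γ_a + γ_b` positive. -/
def InQSS {n : ℕ} (a b : Fin n → ℕ) (x : (l : ℕ) × (Fin l → ℕ) × (Fin l → ℕ)) : Prop :=
  x.1 ≤ n ∧
  Dominates (shiftComp 0 n x.2.1) a ∧ flat x.2.1 = flat a ∧
  Dominates (shiftComp 0 n x.2.2) b ∧ flat x.2.2 = flat b ∧
  ∀ k : Fin x.1, 0 < x.2.1 k + x.2.2 k

/-- `c = bump_{(a,b)}(γ_a, γ_b)`: the unique weak composition `c` of length `n` with
`flat(c) = γ_a + γ_b` whose decomposition `c = c_a + c_b` satisfies `c_a ≥ a` and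
`c_b ≥ b`, minimal in dominance order among all such compositions. -/
def IsBumpQ {n : ℕ} (a b : Fin n → ℕ) (x : (l : ℕ) × (Fin l → ℕ) × (Fin l → ℕ))
    (c : Fin n → ℕ) : Prop :=
  ∃ ι : Fin x.1 → Fin n, StrictMono ι ∧
    c = spread ι (fun k => x.2.1 k + x.2.2 k) ∧
    Dominates (spread ι x.2.1) a ∧ Dominates (spread ι x.2.2) b ∧
    ∀ ι' : Fin x.1 → Fin n, StrictMono ι' →
      Dominates (spread ι' x.2.1) a → Dominates (spread ι' x.2.2) b →
      Dominates (spread ι' (fun k => x.2.1 k + x.2.2 k)) c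

/-- The multiplicity `[c ∣ a ⧻ b]` of `c` in the quasi-slide product of `a` and `b`: the
number of pairs in the quasi-shuffle set `QSS(a,b)` whose bump is `c`. -/
noncomputable def qsMult {n : ℕ} (a b c : Fin n → ℕ) : ℕ :=
  Nat.card {x : (l : ℕ) × (Fin l → ℕ) × (Fin l → ℕ) // InQSS a b x ∧ IsBumpQ a b x c}

/-- The Stanley symmetric function `S_w`. -/
noncomputable def StanleySym (w : Equiv.Perm ℕ) : MvPowerSeries ℕ ℤ :=
  ∑ᶠ l ∈ {l : List ℕ | wordPerm l = w ∧ IsReducedWord l}, FqsFun (desStrict l)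

/-!
Every polynomial involved is a sum of distinct monomials with coefficient 1, so each identity
is a statement about which exponent vectors `d` occur. A weak composition `d` with
`flat d = α` is the placement of the parts of `α` at a unique increasing sequence of
positions; hence `x^d` occurs in `M_α(x_1, …, x_k)` iff `flat d = α` and `d` vanishes beyond
position `k`, and in `F_α(x_1, …, x_k)` iff `flat d` refines `α` and `d` vanishes beyond `k`.
Setting the variables beyond `m + ℓ` to zero in the slide polynomials of `0^m × a` keeps exactly
these conditions, except that `d ≥ 0^m × a` is also required; but that is automatic: the first
`m + q` entries of `d` contain all but at most `ℓ - q` of its nonzero entries, and since every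
block of the refinement is nonempty these cover the first `q` blocks, whose sum is at least
`a_1 + ⋯ + a_q`. For the limit, a fixed exponent vector vanishes beyond position `m` once `m`
is large.
-/

lemma sum_take_le_sum_take {L : List ℕ} {i j : ℕ} (h : i ≤ j) : (L.take i).sum ≤ (L.take j).sum :=
  (List.take_sublist_take_left h).sum_le_sum fun _ _ => Nat.zero_le _

lemma sum_filter_ne_zero (L : List ℕ) : (L.filter (· ≠ 0)).sum = L.sum := by
  induction L with
  | nil => rfl
  | cons x t ih =>
    rw [List.filter_cons]
    split <;> simp_all

lemma sum_take_le_sum_take_filter_ne_zero (L : List ℕ) (q : ℕ) :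
    (L.take q).sum ≤ ((L.filter (· ≠ 0)).take q).sum := by
  induction L generalizing q with
  | nil => simp
  | cons x t ih =>
    cases q with
    | zero => simp
    | succ q =>
      by_cases hx : x = 0
      · simpa [List.filter_cons, hx] using (ih q).trans (sum_take_le_sum_take q.le_succ)
      · simpa [List.filter_cons, hx] using ih q

lemma length_filter_ne_zero_le {L : List ℕ} {k : ℕ} (h : ∀ x ∈ L.drop k, x = 0) :
    (L.filter (· ≠ 0)).length ≤ k := by
  have hnil : (L.drop k).filter (· ≠ 0) = [] :=
    List.filter_eq_nil_iff.2 fun x hx => by simpa using h x hx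
  rw [← List.take_append_drop k L, List.filter_append, hnil, List.append_nil]
  exact (List.length_filter_le _ _).trans (List.length_take_le _ _)

/-- If the entries of `L` vanish from position `K` on, at most `K - i` of its nonzero entries lie
at or after position `i`. -/
lemma sum_take_filter_ne_zero_le {L : List ℕ} {K : ℕ} (h : ∀ x ∈ L.drop K, x = 0) (i : ℕ) :
    ((L.filter (· ≠ 0)).take ((L.filter (· ≠ 0)).length - (K - i))).sum ≤ (L.take i).sum := by
  have hsplit : L.filter (· ≠ 0) = (L.take i).filter (· ≠ 0) ++ (L.drop i).filter (· ≠ 0) := by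
    rw [← List.filter_append, List.take_append_drop]
  have htail : ((L.drop i).filter (· ≠ 0)).length ≤ K - i := by
    refine length_filter_ne_zero_le fun x hx => h x ?_
    rw [List.drop_drop] at hx
    rw [show i + (K - i) = K + (i - K) by omega, ← List.drop_drop] at hx
    exact List.mem_of_mem_drop hx
  have hlen : (L.filter (· ≠ 0)).length - (K - i) ≤ ((L.take i).filter (· ≠ 0)).length := by
    rw [hsplit, List.length_append]; omega
  rw [hsplit, List.take_append_of_le_length (by rwa [← hsplit]), ← sum_filter_ne_zero (L.take i)]
  exact (List.take_sublist _ _).sum_le_sum fun _ _ => Nat.zero_le _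

lemma Refines.refl (α : List ℕ) : Refines α α :=
  ⟨α.map fun x => [x], List.flatMap_singleton' α, by simp [Function.comp_def]⟩

lemma Refines.sum_eq {β α : List ℕ} (h : Refines β α) : β.sum = α.sum := by
  obtain ⟨L, rfl, rfl⟩ := h
  exact List.sum_flatten

/-- The first `q` parts of `α` are the sums of the first `q` blocks of `β`; as every block is
nonempty, the remaining blocks use at least `α.length - q` parts of `β`. -/
lemma Refines.sum_take_le {β α : List ℕ} (h : Refines β α) (hα : ∀ x ∈ α, x ≠ 0) (q : ℕ) :
    (α.take q).sum ≤ (β.take (β.length - (α.length - q))).sum := by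
  obtain ⟨L, rfl, rfl⟩ := h
  have hblocks : ∀ x ∈ (L.drop q).map List.length, 1 ≤ x := by
    simp only [List.mem_map]
    rintro _ ⟨B, hB, rfl⟩
    have hB0 : B.sum ≠ 0 := hα _ (List.mem_map_of_mem (List.mem_of_mem_drop hB))
    exact List.length_pos_iff.2 (by rintro rfl; exact hB0 rfl)
  have hlen : (L.drop q).length ≤ ((L.drop q).flatten).length := by
    simpa [List.length_flatten] using List.length_le_sum_of_one_le _ hblocks
  have hsplit : L.flatten = (L.take q).flatten ++ (L.drop q).flatten := by
    rw [← List.flatten_append, List.take_append_drop]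
  calc ((L.map List.sum).take q).sum = (L.flatten.take (L.take q).flatten.length).sum := by
        rw [hsplit, List.take_left, List.sum_flatten, List.map_take]
    _ ≤ _ := sum_take_le_sum_take (by
        rw [hsplit, List.length_append, List.length_map, ← List.length_drop]; omega)

lemma sum_take_replicate_append_le {A D : List ℕ} {m : ℕ}
    (href : Refines (D.filter (· ≠ 0)) (A.filter (· ≠ 0)))
    (hD : ∀ x ∈ D.drop (m + (A.filter (· ≠ 0)).length), x = 0) (i : ℕ) :
    ((List.replicate m 0 ++ A).take i).sum ≤ (D.take i).sum := by
  rw [List.take_append, List.sum_append, List.take_replicate, List.sum_replicate, smul_zero,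
    zero_add, List.length_replicate]
  rcases le_or_gt i m with him | hmi
  · simp [Nat.sub_eq_zero_of_le him]
  · calc (A.take (i - m)).sum ≤ ((A.filter (· ≠ 0)).take (i - m)).sum :=
          sum_take_le_sum_take_filter_ne_zero A _
      _ ≤ _ := href.sum_take_le (fun x hx => by simpa using (List.mem_filter.1 hx).2) _
      _ = _ := by congr 3; omega
      _ ≤ (D.take i).sum := sum_take_filter_ne_zero_le hD i

lemma psum_eq_sum_take {n : ℕ} (a : Fin n → ℕ) (i : ℕ) :
    psum a i = ((List.ofFn a).take i).sum :=
  (List.sum_take_ofFn a i).symm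

lemma ofFn_shiftComp {n m : ℕ} (a : Fin n → ℕ) :
    List.ofFn (shiftComp m (m + n) a) = List.replicate m 0 ++ List.ofFn a := by
  rw [List.ofFn_add, ← List.ofFn_const]
  congr 2 <;> funext i <;> simp [shiftComp]

lemma flat_shiftComp {n m : ℕ} (a : Fin n → ℕ) : flat (shiftComp m (m + n) a) = flat a := by
  simp [flat, ofFn_shiftComp, List.filter_append]

lemma flat_ne_zero {n : ℕ} (a : Fin n → ℕ) : ∀ x ∈ flat a, x ≠ 0 := by
  simp [flat]

lemma eq_zero_of_mem_drop_ofFn {N K : ℕ} {d : Fin N → ℕ}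
    (hd : ∀ i : Fin N, K ≤ (i : ℕ) → d i = 0) : ∀ x ∈ (List.ofFn d).drop K, x = 0 := by
  intro x hx
  obtain ⟨j, hj, rfl⟩ := List.mem_iff_getElem.1 hx
  simp only [List.getElem_drop, List.getElem_ofFn]
  exact hd _ (Nat.le_add_right K j)

lemma dominates_shiftComp {m n : ℕ} {a : Fin n → ℕ} {d : Fin (m + n) → ℕ}
    (href : Refines (flat d) (flat a))
    (hd : ∀ i : Fin (m + n), m + (flat a).length ≤ (i : ℕ) → d i = 0) :
    Dominates d (shiftComp m (m + n) a) := fun i => by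
  rw [psum_eq_sum_take, psum_eq_sum_take, ofFn_shiftComp]
  exact sum_take_replicate_append_le href (eq_zero_of_mem_drop_ofFn hd) i

lemma length_flat_le {N k : ℕ} {d : Fin N → ℕ} (hd : ∀ i : Fin N, k ≤ (i : ℕ) → d i = 0) :
    (flat d).length ≤ k :=
  length_filter_ne_zero_le (eq_zero_of_mem_drop_ofFn hd)

section Placement

variable {N : ℕ} {α : List ℕ} {ι : Fin α.length → Fin N}

lemma placeExp_apply_self (hι : Function.Injective ι) (t : Fin α.length) :
    placeExp α ι (ι t) = α.get t := by
  simp [placeExp, Finsupp.finsetSum_apply, Finsupp.single_apply, hι.eq_iff]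

lemma placeExp_apply_of_notMem_range {i : Fin N} (hi : i ∉ Set.range ι) : placeExp α ι i = 0 := by
  simp only [placeExp, Finsupp.finsetSum_apply, Finsupp.single_apply]
  exact Finset.sum_eq_zero fun t _ => if_neg fun h => hi ⟨t, h⟩

lemma placeExp_ne_zero_iff (hα : ∀ x ∈ α, x ≠ 0) (hι : Function.Injective ι) (i : Fin N) :
    placeExp α ι i ≠ 0 ↔ i ∈ Set.range ι := by
  refine ⟨not_imp_comm.1 placeExp_apply_of_notMem_range, ?_⟩
  rintro ⟨t, rfl⟩
  rw [placeExp_apply_self hι]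
  exact hα _ (List.get_mem _ _)

lemma filter_finRange_eq_ofFn {l : ℕ} {κ : Fin l → Fin N} (hκ : StrictMono κ) {p : Fin N → Prop}
    [DecidablePred p] (hp : ∀ i, p i ↔ i ∈ Set.range κ) :
    (List.finRange N).filter (p ·) = List.ofFn κ :=
  ((List.sortedLT_finRange N).pairwise.filter _).sortedLT.eq_of_mem_iff hκ.sortedLT_ofFn
    (by simp [hp, List.mem_ofFn])

lemma flat_eq_ofFn_comp {l : ℕ} {κ : Fin l → Fin N} (hκ : StrictMono κ) {d : Fin N → ℕ}
    (hd : ∀ i, d i ≠ 0 ↔ i ∈ Set.range κ) : flat d = List.ofFn (d ∘ κ) := by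
  rw [flat, List.ofFn_eq_map, List.filter_map, ← List.map_ofFn]
  congr 1
  exact filter_finRange_eq_ofFn hκ hd

lemma flat_placeExp (hα : ∀ x ∈ α, x ≠ 0) (hι : StrictMono ι) : flat (placeExp α ι) = α := by
  rw [flat_eq_ofFn_comp hι (placeExp_ne_zero_iff hα hι.injective)]
  conv_rhs => rw [← List.ofFn_get α]
  exact congrArg List.ofFn (funext (placeExp_apply_self hι.injective))

lemma placeExp_injOn (hα : ∀ x ∈ α, x ≠ 0) :
    Set.InjOn (placeExp α) {ι : Fin α.length → Fin N | StrictMono ι} := fun ι hι ι' hι' h =>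
  (hι.range_inj hι').1 <| Set.ext fun i => by
    rw [← placeExp_ne_zero_iff hα hι.injective, h, placeExp_ne_zero_iff hα hι'.injective]

lemma exists_strictMono_placeExp_flat_eq (d : Fin N → ℕ) :
    ∃ ι : Fin (flat d).length → Fin N, StrictMono ι ∧
      placeExp (flat d) ι = Finsupp.equivFunOnFinite.symm d := by
  set S := Finset.univ.filter fun i => d i ≠ 0
  have hcard : S.card = (flat d).length := by
    rw [flat, List.ofFn_eq_map, List.filter_map, List.length_map,
      ← List.toFinset_card_of_nodup ((List.nodup_finRange N).filter _)]
    congr 1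
    ext i
    simp [S]
  set ι := S.orderEmbOfFin hcard
  have hsupp : ∀ i, d i ≠ 0 ↔ i ∈ Set.range ι := by simp [ι, S]
  have hflat := flat_eq_ofFn_comp ι.strictMono hsupp
  have hval : ∀ t, d (ι t) = (flat d).get t := fun t => by
    rw [List.get_of_eq hflat, List.get_ofFn]
    rfl
  refine ⟨ι, ι.strictMono, Finsupp.ext fun i => ?_⟩
  by_cases hi : i ∈ Set.range ι
  · obtain ⟨t, rfl⟩ := hi
    rw [placeExp_apply_self ι.injective, Finsupp.coe_equivFunOnFinite_symm, hval]
  · rw [placeExp_apply_of_notMem_range hi, Finsupp.coe_equivFunOnFinite_symm]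
    exact (not_not.1 (mt (hsupp i).1 hi)).symm

lemma exists_strictMono_placeExp_eq_iff (hα : ∀ x ∈ α, x ≠ 0) (d : Fin N → ℕ) :
    (∃ ι : Fin α.length → Fin N, StrictMono ι ∧
      placeExp α ι = Finsupp.equivFunOnFinite.symm d) ↔ flat d = α := by
  constructor
  · rintro ⟨ι, hι, h⟩
    rw [← flat_placeExp hα hι, h, Finsupp.coe_equivFunOnFinite_symm]
  · rintro rfl
    exact exists_strictMono_placeExp_flat_eq d

lemma forall_lt_iff_placeExp_eq_zero (hα : ∀ x ∈ α, x ≠ 0) (hι : Function.Injective ι) (k : ℕ) :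
    (∀ t, (ι t : ℕ) < k) ↔ ∀ i : Fin N, k ≤ (i : ℕ) → placeExp α ι i = 0 := by
  constructor
  · intro h i hi
    by_contra hne
    obtain ⟨t, rfl⟩ := (placeExp_ne_zero_iff hα hι i).1 hne
    exact absurd (h t) (not_lt.2 hi)
  · intro h t
    by_contra hlt
    exact (placeExp_ne_zero_iff hα hι _).2 ⟨t, rfl⟩ (h _ (not_lt.1 hlt))

end Placement

lemma sum_ite_eq_of_injOn {ι κ M : Type*} [DecidableEq κ] [AddCommMonoid M] {s : Finset ι}
    {e : ι → κ} (he : Set.InjOn e s) (u : κ) (c : M) :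
    ∑ i ∈ s, (if e i = u then c else 0) = if ∃ i ∈ s, e i = u then c else 0 := by
  rw [← Finset.sum_image (f := fun v => if v = u then c else 0) he, Finset.sum_ite_eq']
  exact if_congr Finset.mem_image rfl rfl

lemma coeff_sum_monomial_of_injOn {σ ι R : Type*} [DecidableEq σ] [CommSemiring R] {s : Finset ι}
    {e : ι → σ →₀ ℕ} (he : Set.InjOn e s) (u : σ →₀ ℕ) (c : R) :
    MvPolynomial.coeff u (∑ i ∈ s, MvPolynomial.monomial (e i) c)
      = if ∃ i ∈ s, e i = u then c else 0 := by
  simp only [MvPolynomial.coeff_sum, MvPolynomial.coeff_monomial]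
  exact sum_ite_eq_of_injOn he u c

lemma sum_eq_sum_flat {N : ℕ} (d : Fin N → ℕ) : ∑ i, d i = (flat d).sum := by
  rw [flat, sum_filter_ne_zero, List.sum_ofFn]

lemma coeff_sum_filter_wcFinset {n : ℕ} (a : Fin n → ℕ) {P : (Fin n → ℕ) → Prop}
    [DecidablePred P] (hP : ∀ b, P b → (flat b).sum = (flat a).sum) (d : Fin n → ℕ) :
    MvPolynomial.coeff (Finsupp.equivFunOnFinite.symm d)
      (∑ b ∈ (wcFinset n (∑ i, a i)).filter P,
        MvPolynomial.monomial (Finsupp.equivFunOnFinite.symm b) (1 : ℤ))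
      = if P d then 1 else 0 := by
  refine (coeff_sum_monomial_of_injOn Finsupp.equivFunOnFinite.symm.injective.injOn _ _).trans
    (if_congr ?_ rfl rfl)
  simp only [Finset.mem_filter, EmbeddingLike.apply_eq_iff_eq,
    exists_eq_right, and_iff_right_iff_imp]
  intro hd
  simp only [wcFinset, Fintype.mem_piFinset, Finset.mem_range, Nat.lt_succ_iff]
  intro i
  rw [sum_eq_sum_flat, ← hP d hd, ← sum_eq_sum_flat]
  exact Finset.single_le_sum (fun j _ => Nat.zero_le (d j)) (Finset.mem_univ i)

lemma coeff_slideM {n : ℕ} (a d : Fin n → ℕ) :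
    MvPolynomial.coeff (Finsupp.equivFunOnFinite.symm d) (slideM a)
      = if Dominates d a ∧ flat d = flat a then 1 else 0 :=
  coeff_sum_filter_wcFinset a (fun _ h => congrArg List.sum h.2) d

lemma coeff_slideF {n : ℕ} (a d : Fin n → ℕ) :
    MvPolynomial.coeff (Finsupp.equivFunOnFinite.symm d) (slideF a)
      = if Dominates d a ∧ Refines (flat d) (flat a) then 1 else 0 :=
  coeff_sum_filter_wcFinset a (fun _ h => h.2.sum_eq) d

lemma Mqs_eq_sum_monomial (N k : ℕ) (α : List ℕ) :
    Mqs N k α = ∑ ι ∈ Finset.univ.filter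
      (fun ι : Fin α.length → Fin N => StrictMono ι ∧ ∀ t, (ι t : ℕ) < k),
      MvPolynomial.monomial (placeExp α ι) 1 := by
  refine Finset.sum_congr rfl fun ι _ => ?_
  simp only [placeExp, MvPolynomial.monomial_sum_one, MvPolynomial.X_pow_eq_monomial]

lemma coeff_Mqs {N : ℕ} (k : ℕ) {α : List ℕ} (hα : ∀ x ∈ α, x ≠ 0) (d : Fin N → ℕ) :
    MvPolynomial.coeff (Finsupp.equivFunOnFinite.symm d) (Mqs N k α)
      = if flat d = α ∧ ∀ i : Fin N, k ≤ (i : ℕ) → d i = 0 then 1 else 0 := by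
  rw [Mqs_eq_sum_monomial]
  refine (coeff_sum_monomial_of_injOn
    ((placeExp_injOn hα).mono fun ι hι => (Finset.mem_filter.1 hι).2.1) _ _).trans
    (if_congr ?_ rfl rfl)
  simp only [Finset.mem_filter, Finset.mem_univ, true_and]
  constructor
  · rintro ⟨ι, ⟨hι, hk⟩, h⟩
    refine ⟨(exists_strictMono_placeExp_eq_iff hα d).1 ⟨ι, hι, h⟩, ?_⟩
    simpa [h] using (forall_lt_iff_placeExp_eq_zero hα hι.injective k).1 hk
  · rintro ⟨hflat, hk⟩
    obtain ⟨ι, hι, h⟩ := (exists_strictMono_placeExp_eq_iff hα d).2 hflat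
    refine ⟨ι, ⟨hι, (forall_lt_iff_placeExp_eq_zero hα hι.injective k).2 ?_⟩, h⟩
    simpa [h] using hk

lemma sum_filter_composition_ite_blocks_eq {s : ℕ} (Q : List ℕ → Prop) [DecidablePred Q]
    {β : List ℕ} (hβ : ∀ x ∈ β, x ≠ 0) (hQ : Q β → β.sum = s) :
    ∑ c ∈ Finset.univ.filter (fun c : Composition s => Q c.blocks),
      (if c.blocks = β then (1 : ℤ) else 0) = if Q β then 1 else 0 := by
  refine (sum_ite_eq_of_injOn (fun c _ c' _ h => Composition.ext h) β 1).trans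
    (if_congr ⟨?_, fun h => ?_⟩ rfl rfl)
  · rintro ⟨c, hc, rfl⟩
    exact (Finset.mem_filter.1 hc).2
  · exact ⟨⟨β, fun hx => Nat.pos_of_ne_zero (hβ _ hx), hQ h⟩, by simpa using h, rfl⟩

lemma coeff_Fqs {N : ℕ} (k : ℕ) (α : List ℕ) (d : Fin N → ℕ) :
    MvPolynomial.coeff (Finsupp.equivFunOnFinite.symm d) (Fqs N k α)
      = if Refines (flat d) α ∧ ∀ i : Fin N, k ≤ (i : ℕ) → d i = 0 then 1 else 0 := by
  have hterm : ∀ c : Composition α.sum,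
      MvPolynomial.coeff (Finsupp.equivFunOnFinite.symm d) (Mqs N k c.blocks)
        = if flat d = c.blocks ∧ ∀ i : Fin N, k ≤ (i : ℕ) → d i = 0 then 1 else 0 :=
    fun c => coeff_Mqs k (fun _ hx => (c.blocks_pos hx).ne') d
  rw [Fqs, MvPolynomial.coeff_sum, Finset.sum_congr rfl fun c _ => hterm c]
  by_cases hd : ∀ i : Fin N, k ≤ (i : ℕ) → d i = 0
  · rw [Finset.sum_congr rfl fun c _ => if_congr ((and_iff_left hd).trans eq_comm) rfl rfl,
      sum_filter_composition_ite_blocks_eq (fun β => Refines β α ∧ β.length ≤ k)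
        (flat_ne_zero d) fun h => h.1.sum_eq]
    exact if_congr ((and_iff_left (length_flat_le hd)).trans (and_iff_left hd).symm) rfl rfl
  · simp [hd]

section Truncation

variable {σ R : Type*} [CommSemiring R] (p : σ → Prop) [DecidablePred p]

lemma aeval_ite_X_monomial (u : σ →₀ ℕ) (c : R) :
    MvPolynomial.aeval (fun j => if p j then MvPolynomial.X j else 0) (MvPolynomial.monomial u c)
      = if ∀ j, ¬ p j → u j = 0 then MvPolynomial.monomial u c else 0 := by
  rw [MvPolynomial.aeval_monomial, MvPolynomial.algebraMap_eq]
  split_ifs with h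
  · rw [MvPolynomial.monomial_eq]
    refine congrArg _ (Finsupp.prod_congr fun j hj => ?_)
    rw [if_pos (by_contra fun hp => Finsupp.mem_support_iff.1 hj (h j hp))]
  · push Not at h
    obtain ⟨j, hp, hu⟩ := h
    rw [Finsupp.prod, Finset.prod_eq_zero (Finsupp.mem_support_iff.2 hu)
      (by rw [if_neg hp, zero_pow hu]), mul_zero]

lemma coeff_aeval_ite_X (f : MvPolynomial σ R) (v : σ →₀ ℕ) :
    MvPolynomial.coeff v (MvPolynomial.aeval (fun j => if p j then MvPolynomial.X j else 0) f)
      = if ∀ j, ¬ p j → v j = 0 then MvPolynomial.coeff v f else 0 := by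
  induction f using MvPolynomial.induction_on' with
  | monomial u c =>
    rw [aeval_ite_X_monomial]
    by_cases huv : u = v
    · subst huv
      split_ifs <;> rfl
    · split_ifs <;> simp [MvPolynomial.coeff_monomial, huv]
  | add f g hf hg =>
    rw [map_add, MvPolynomial.coeff_add, hf, hg, MvPolynomial.coeff_add, ite_add_zero]

end Truncation

lemma mapDomain_val_placeExp {N : ℕ} (α : List ℕ) (ι : Fin α.length → Fin N) :
    Finsupp.mapDomain Fin.val (placeExp α ι)
      = ∑ t : Fin α.length, Finsupp.single (ι t : ℕ) (α.get t) := by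
  simp [placeExp, Finsupp.mapDomain_finsetSum, Finsupp.mapDomain_single]

lemma mapDomain_val_equivFunOnFinite_symm {N : ℕ} {d : ℕ →₀ ℕ} (hd : ∀ i, N ≤ i → d i = 0) :
    Finsupp.mapDomain Fin.val (Finsupp.equivFunOnFinite.symm fun j : Fin N => d j) = d := by
  ext i
  by_cases hi : i < N
  · exact Finsupp.mapDomain_apply Fin.val_injective _ ⟨i, hi⟩
  · rw [Finsupp.mapDomain_of_notMem_range _ _ (by simpa using hi), hd i (not_lt.1 hi)]

lemma coeff_MqsFun {α : List ℕ} (hα : ∀ x ∈ α, x ≠ 0) {N : ℕ} {d : ℕ →₀ ℕ}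
    (hd : ∀ i, N ≤ i → d i = 0) :
    MvPowerSeries.coeff d (MqsFun α) = if flat (fun j : Fin N => d j) = α then 1 else 0 := by
  rw [MvPowerSeries.coeff_apply, MqsFun]
  refine if_congr ?_ rfl rfl
  rw [← exists_strictMono_placeExp_eq_iff hα]
  constructor
  · rintro ⟨i, hi, rfl⟩
    have hlt : ∀ t, i t < N := fun t => by
      by_contra h
      refine hα _ (List.get_mem α t) (Nat.eq_zero_of_le_zero ?_)
      calc α.get t = Finsupp.single (i t) (α.get t) (i t) := by simp
        _ ≤ (∑ s, Finsupp.single (i s) (α.get s)) (i t) := by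
          rw [Finsupp.finsetSum_apply]
          exact Finset.single_le_sum (f := fun s => Finsupp.single (i s) (α.get s) (i t))
            (fun _ _ => Nat.zero_le _) (Finset.mem_univ t)
        _ = 0 := hd _ (not_lt.1 h)
    refine ⟨fun t => ⟨i t, hlt t⟩, fun s t h => hi h,
      Finsupp.mapDomain_injective Fin.val_injective ?_⟩
    rw [mapDomain_val_placeExp, mapDomain_val_equivFunOnFinite_symm hd]
  · rintro ⟨ι, hι, h⟩
    refine ⟨fun t => ι t, fun s t h => hι h, ?_⟩
    rw [← mapDomain_val_equivFunOnFinite_symm hd, ← h, mapDomain_val_placeExp]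

lemma coeff_FqsFun (α : List ℕ) {N : ℕ} {d : ℕ →₀ ℕ} (hd : ∀ i, N ≤ i → d i = 0) :
    MvPowerSeries.coeff d (FqsFun α)
      = if Refines (flat (fun j : Fin N => d j)) α then 1 else 0 := by
  rw [FqsFun, map_sum, Finset.sum_congr rfl fun c _ =>
      (coeff_MqsFun (fun _ hx => (c.blocks_pos hx).ne') hd).trans (if_congr eq_comm rfl rfl),
    sum_filter_composition_ite_blocks_eq (fun β => Refines β α) (flat_ne_zero _) Refines.sum_eq]

section ShiftedSlides

variable {n : ℕ} (a : Fin n → ℕ) (m : ℕ)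

lemma aeval_slideM_shiftComp :
    MvPolynomial.aeval (fun j : Fin (m + n) => if (j : ℕ) < m + (flat a).length
        then (MvPolynomial.X j : MvPolynomial (Fin (m + n)) ℤ) else 0)
      (slideM (shiftComp m (m + n) a)) = Mqs (m + n) (m + (flat a).length) (flat a) := by
  ext u
  obtain ⟨d, rfl⟩ := Finsupp.equivFunOnFinite.symm.surjective u
  rw [coeff_aeval_ite_X, coeff_slideM, coeff_Mqs _ (flat_ne_zero a), flat_shiftComp]
  simp only [not_lt, Finsupp.coe_equivFunOnFinite_symm]
  by_cases hd : ∀ i : Fin (m + n), m + (flat a).length ≤ (i : ℕ) → d i = 0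
  · rw [if_pos hd]
    exact if_congr ((and_iff_right_of_imp fun h =>
      dominates_shiftComp (h ▸ Refines.refl _) hd).trans (and_iff_left hd).symm) rfl rfl
  · rw [if_neg hd, if_neg fun h => hd h.2]

lemma aeval_slideF_shiftComp :
    MvPolynomial.aeval (fun j : Fin (m + n) => if (j : ℕ) < m + (flat a).length
        then (MvPolynomial.X j : MvPolynomial (Fin (m + n)) ℤ) else 0)
      (slideF (shiftComp m (m + n) a)) = Fqs (m + n) (m + (flat a).length) (flat a) := by
  ext u
  obtain ⟨d, rfl⟩ := Finsupp.equivFunOnFinite.symm.surjective u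
  rw [coeff_aeval_ite_X, coeff_slideF, coeff_Fqs, flat_shiftComp]
  simp only [not_lt, Finsupp.coe_equivFunOnFinite_symm]
  by_cases hd : ∀ i : Fin (m + n), m + (flat a).length ≤ (i : ℕ) → d i = 0
  · rw [if_pos hd]
    exact if_congr ((and_iff_right_of_imp fun h => dominates_shiftComp h hd).trans
      (and_iff_left hd).symm) rfl rfl
  · rw [if_neg hd, if_neg fun h => hd h.2]

lemma coeff_slideM_shiftComp {d : ℕ →₀ ℕ} (hd : ∀ i, m ≤ i → d i = 0) :
    MvPolynomial.coeff (Finsupp.equivFunOnFinite.symm fun j : Fin (m + n) => d j)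
      (slideM (shiftComp m (m + n) a)) = MvPowerSeries.coeff d (MqsFun (flat a)) := by
  rw [coeff_slideM, coeff_MqsFun (flat_ne_zero a) (N := m + n) fun i hi => hd i (by omega),
    flat_shiftComp]
  exact if_congr (and_iff_right_of_imp fun h =>
    dominates_shiftComp (h ▸ Refines.refl _) fun i hi => hd i (by omega)) rfl rfl

lemma coeff_slideF_shiftComp {d : ℕ →₀ ℕ} (hd : ∀ i, m ≤ i → d i = 0) :
    MvPolynomial.coeff (Finsupp.equivFunOnFinite.symm fun j : Fin (m + n) => d j)
      (slideF (shiftComp m (m + n) a)) = MvPowerSeries.coeff d (FqsFun (flat a)) := by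
  rw [coeff_slideF, coeff_FqsFun _ (N := m + n) fun i hi => hd i (by omega), flat_shiftComp]
  exact if_congr (and_iff_right_of_imp fun h =>
    dominates_shiftComp h fun i hi => hd i (by omega)) rfl rfl

end ShiftedSlides

lemma exists_forall_le_eq_zero (d : ℕ →₀ ℕ) : ∃ M, ∀ i, M ≤ i → d i = 0 := by
  obtain ⟨M, hM⟩ := d.support.exists_nat_subset_range
  exact ⟨M, fun i hi => Finsupp.notMem_support_iff.1 fun h =>
    absurd (Finset.mem_range.1 (hM h)) (not_lt.2 hi)⟩

/-- setting `x_{m+ℓ+1} = ⋯ = x_{m+n} = 0` in `𝔐_{0^m × a}` gives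
`M_{flat(a)}(x_1, …, x_{m+ℓ})`, and likewise for `𝔉` and `F`; consequently, as `m → ∞`
the slide polynomials of `0^m × a` converge coefficientwise to the monomial and
fundamental quasisymmetric functions of `flat(a)`. -/
theorem slide_stable_limit {n : ℕ} (a : Fin n → ℕ) (l : ℕ) (hl : l = (flat a).length) :
    (∀ m : ℕ, 1 ≤ m →
      (MvPolynomial.aeval (fun j : Fin (m + n) =>
          if (j : ℕ) < m + l then (MvPolynomial.X j : MvPolynomial (Fin (m + n)) ℤ) else 0))
          (slideM (shiftComp m (m + n) a)) = Mqs (m + n) (m + l) (flat a) ∧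
      (MvPolynomial.aeval (fun j : Fin (m + n) =>
          if (j : ℕ) < m + l then (MvPolynomial.X j : MvPolynomial (Fin (m + n)) ℤ) else 0))
          (slideF (shiftComp m (m + n) a)) = Fqs (m + n) (m + l) (flat a)) ∧
    (∀ d : ℕ →₀ ℕ, ∃ M : ℕ, ∀ m : ℕ, M ≤ m →
      MvPolynomial.coeff (Finsupp.equivFunOnFinite.symm fun j : Fin (m + n) => d (j : ℕ))
          (slideM (shiftComp m (m + n) a)) = MvPowerSeries.coeff d (MqsFun (flat a))) ∧
    (∀ d : ℕ →₀ ℕ, ∃ M : ℕ, ∀ m : ℕ, M ≤ m →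
      MvPolynomial.coeff (Finsupp.equivFunOnFinite.symm fun j : Fin (m + n) => d (j : ℕ))
          (slideF (shiftComp m (m + n) a)) = MvPowerSeries.coeff d (FqsFun (flat a))) := by
  subst hl
  refine ⟨fun m _ => ⟨aeval_slideM_shiftComp a m, aeval_slideF_shiftComp a m⟩,
    fun d => ?_, fun d => ?_⟩
  · obtain ⟨M, hM⟩ := exists_forall_le_eq_zero d
    exact ⟨M, fun m hm => coeff_slideM_shiftComp a m fun i hi => hM i (hm.trans hi)⟩
  · obtain ⟨M, hM⟩ := exists_forall_le_eq_zero d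
    exact ⟨M, fun m hm => coeff_slideF_shiftComp a m fun i hi => hM i (hm.trans hi)⟩

end SlidePaper
end

section
/- The destandardization map dst on semistandard Young tableaux is well-defined (the process terminates in a semistandard Young tableau) and satisfies: (1) for every T ∈ SSYT_n(λ), dst(T) ∈ QYT_n(λ); (2) for T ∈ SSYT_n(λ), dst(T) = T if and only if T ∈ QYT_n(λ); (3) dst : SSYT_n(λ) → QYT_n(λ) is surjective; and (4) dst : SSYT_n(λ) → QYT_n(λ) is injective if and only if n ≤ ℓ(λ), where ℓ(λ) is the number of parts of λ. -/
open scoped Classical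

namespace SlidePaper

/-!
A destandardization step never changes the order of the cells by the key (value, column), and a
filling to which no step applies is determined by this order: reading its cells in increasing key,
the value starts at `0` and goes up by one exactly when the column does not increase. Hence every
tableau has a unique normal form, its destandardization, and the normal forms are exactly the
quasi-Yamanouchi tableaux. If `n ≤ ℓ(λ)` the first column reads `0, …, n - 1`, so every tableau is
already quasi-Yamanouchi; otherwise filling row `r` with `r` or with `r + 1` gives two tableaux with
the same key order, hence the same destandardization.
-/

theorem _root_.Relation.exists_reflTransGen_not_rel {α : Type*} {r : α → α → Prop}
    (f : α → ℕ) (hf : ∀ a b, r a b → f b < f a) (a : α) :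
    ∃ b, Relation.ReflTransGen r a b ∧ ¬ ∃ c, r b c := by
  induction a using (measure f).wf.induction with
  | _ a ih =>
    by_cases hstep : ∃ b, r a b
    · obtain ⟨b, hab⟩ := hstep
      obtain ⟨c, hbc, hc⟩ := ih b (hf a b hab)
      exact ⟨c, .head hab hbc, hc⟩
    · exact ⟨a, .refl, hstep⟩

section Destandardization

variable {n : ℕ} {lam : List ℕ}

def stdKey (T : Cells lam → Fin n) (x : Cells lam) : ℕ ×ₗ ℕ :=
  toLex ((T x : ℕ), (x.2 : ℕ))

theorem stdKey_lt_stdKey {T : Cells lam → Fin n} {x y : Cells lam} :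
    stdKey T x < stdKey T y ↔ (T x : ℕ) < T y ∨ (T x : ℕ) = T y ∧ (x.2 : ℕ) < y.2 :=
  Prod.Lex.toLex_lt_toLex

def SameStdOrder (T U : Cells lam → Fin n) : Prop :=
  ∀ x y, stdKey T x < stdKey T y ↔ stdKey U x < stdKey U y

theorem SameStdOrder.symm {T U : Cells lam → Fin n} (h : SameStdOrder T U) :
    SameStdOrder U T :=
  fun x y => (h x y).symm

theorem SameStdOrder.trans {T U V : Cells lam → Fin n} (h : SameStdOrder T U)
    (h' : SameStdOrder U V) : SameStdOrder T V :=
  fun x y => (h x y).trans (h' x y)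

theorem TabStep.sum_lt {T U : Cells lam → Fin n} (h : TabStep T U) :
    ∑ x, (U x : ℕ) < ∑ x, (T x : ℕ) := by
  obtain ⟨v, hv0, ⟨x₀, hx₀⟩, -, hU⟩ := h
  refine Finset.sum_lt_sum (fun x _ => ?_) ⟨x₀, Finset.mem_univ _, ?_⟩
  · rw [hU x]; split_ifs <;> omega
  · rw [hU x₀, if_pos hx₀, hx₀]; omega

theorem exists_tabStep {T : Cells lam → Fin n} (v : Fin n) (hv : 0 < (v : ℕ))
    (hocc : ∃ x, T x = v)
    (hleft : ∀ x y, T x = v → (T y : ℕ) + 1 = v → (y.2 : ℕ) < x.2) :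
    ∃ U, TabStep T U :=
  ⟨fun x => if T x = v then ⟨v - 1, by omega⟩ else T x, v, hv, hocc, hleft,
    fun x => apply_ite Fin.val _ _ _⟩

theorem TabStep.sameStdOrder {T U : Cells lam → Fin n} (h : TabStep T U) :
    SameStdOrder T U := by
  obtain ⟨v, -, -, hleft, hU⟩ := h
  intro x y
  have hxy := hleft x y
  have hyx := hleft y x
  simp only [stdKey_lt_stdKey, hU x, hU y, Fin.ext_iff] at *
  split_ifs <;> omega

theorem TabStep.isSSYT {T U : Cells lam → Fin n} (h : TabStep T U) (hT : IsSSYT T) :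
    IsSSYT U := by
  obtain ⟨v, -, -, hleft, hU⟩ := h
  refine ⟨fun r c c' hc => ?_, fun r r' c' hc hr => ?_⟩
  · have hrow := hT.1 r c c' hc
    rw [Fin.le_def] at hrow ⊢
    simp only [hU, Fin.ext_iff]
    split_ifs <;> omega
  · have hcol := hT.2 r r' c' hc hr
    have hleft' := hleft ⟨r', c'⟩ ⟨r, ⟨c', hc⟩⟩
    rw [Fin.lt_def] at hcol ⊢
    simp only [hU, Fin.ext_iff] at hleft' ⊢
    split_ifs <;> omega

theorem IsSSYT.of_reflTransGen {T U : Cells lam → Fin n} (hT : IsSSYT T)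
    (h : Relation.ReflTransGen TabStep T U) : IsSSYT U := by
  induction h with
  | refl => exact hT
  | tail _ hstep ih => exact hstep.isSSYT ih

theorem SameStdOrder.of_reflTransGen {T U : Cells lam → Fin n}
    (h : Relation.ReflTransGen TabStep T U) : SameStdOrder T U := by
  induction h with
  | refl => exact fun _ _ => .rfl
  | tail _ hstep ih => exact ih.trans hstep.sameStdOrder

theorem not_tabStep_iff_isQY {T : Cells lam → Fin n} : (¬ ∃ U, TabStep T U) ↔ IsQY T := by
  constructor
  · intro hT v x hx hv hmin
    by_contra! hright
    refine hT (exists_tabStep v hv ⟨x, hx⟩ fun z w hz hw => ?_)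
    exact (hright w hw).trans_le (hmin z hz)
  · rintro hQY ⟨U, v, hv, ⟨x₀, hx₀⟩, hleft, -⟩
    obtain ⟨x, hx, hmin⟩ := Finset.exists_min_image
      (Finset.univ.filter (T · = v)) (fun y => (y.2 : ℕ)) ⟨x₀, by simp [hx₀]⟩
    simp only [Finset.mem_filter, Finset.mem_univ, true_and] at hx hmin
    obtain ⟨z, hz, hxz⟩ := hQY v x hx hv hmin
    exact (hleft x z hx hz).not_ge hxz

theorem val_eq_zero_of_not_tabStep {U : Cells lam → Fin n} (hU : ¬ ∃ V, TabStep U V)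
    {x : Cells lam} (hmin : ∀ y, ¬ stdKey U y < stdKey U x) : (U x : ℕ) = 0 := by
  by_contra hx
  refine hU (exists_tabStep (U x) (by omega) ⟨x, rfl⟩ fun z w hz hw => ?_)
  exact absurd (stdKey_lt_stdKey.2 (.inl (by omega))) (hmin w)

theorem val_eq_of_not_tabStep {U : Cells lam → Fin n} (hU : ¬ ∃ V, TabStep U V)
    {p x : Cells lam} (hpx : stdKey U p < stdKey U x)
    (hnext : ∀ q, stdKey U q < stdKey U x → ¬ stdKey U p < stdKey U q) :
    (U x : ℕ) = U p + if (x.2 : ℕ) ≤ p.2 then 1 else 0 := by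
  simp only [stdKey_lt_stdKey] at hpx hnext
  have hjump : (U x : ℕ) ≤ U p + 1 ∧ ((U x : ℕ) = U p + 1 → (x.2 : ℕ) ≤ p.2) := by
    by_contra hjump
    refine hU (exists_tabStep (U x) (by omega) ⟨x, rfl⟩ fun z w hz hw => ?_)
    have hz' := hnext z
    have hw' := hnext w
    simp only [Fin.ext_iff] at hz
    omega
  split_ifs <;> omega

theorem eq_of_not_tabStep_of_sameStdOrder {U W : Cells lam → Fin n}
    (hU : ¬ ∃ V, TabStep U V) (hW : ¬ ∃ V, TabStep W V) (h : SameStdOrder U W) : U = W := by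
  funext x
  induction x using (InvImage.wf (stdKey U) wellFounded_lt).induction with
  | _ x ih =>
    by_cases hmin : ∀ y, ¬ stdKey U y < stdKey U x
    · exact Fin.ext <| (val_eq_zero_of_not_tabStep hU hmin).trans
        (val_eq_zero_of_not_tabStep hW fun y => (h y x).not.1 (hmin y)).symm
    obtain ⟨y, hy⟩ := not_forall_not.1 hmin
    obtain ⟨p, hp, hmax⟩ := Finset.exists_max_image
      (Finset.univ.filter (stdKey U · < stdKey U x)) (stdKey U) ⟨y, by simpa using hy⟩
    simp only [Finset.mem_filter, Finset.mem_univ, true_and] at hp hmax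
    have hnext : ∀ q, stdKey U q < stdKey U x → ¬ stdKey U p < stdKey U q :=
      fun q hq => not_lt.2 (hmax q hq)
    refine Fin.ext ?_
    rw [val_eq_of_not_tabStep hU hp hnext, ih p hp,
      val_eq_of_not_tabStep hW ((h p x).1 hp) fun q hq => (h p q).not.1 (hnext q ((h q x).2 hq))]

theorem exists_reflTransGen_not_tabStep (T : Cells lam → Fin n) :
    ∃ U, Relation.ReflTransGen TabStep T U ∧ ¬ ∃ V, TabStep U V :=
  Relation.exists_reflTransGen_not_rel (fun T => ∑ x, (T x : ℕ)) (fun _ _ h => h.sum_lt) T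

noncomputable def destandardize (T : Cells lam → Fin n) : Cells lam → Fin n :=
  (exists_reflTransGen_not_tabStep T).choose

theorem reflTransGen_destandardize (T : Cells lam → Fin n) :
    Relation.ReflTransGen TabStep T (destandardize T) :=
  (exists_reflTransGen_not_tabStep T).choose_spec.1

theorem not_tabStep_destandardize (T : Cells lam → Fin n) :
    ¬ ∃ U, TabStep (destandardize T) U :=
  (exists_reflTransGen_not_tabStep T).choose_spec.2

theorem destandardize_eq_of_sameStdOrder {T T' : Cells lam → Fin n} (h : SameStdOrder T T') :
    destandardize T = destandardize T' :=
  eq_of_not_tabStep_of_sameStdOrder (not_tabStep_destandardize T) (not_tabStep_destandardize T')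
    (((SameStdOrder.of_reflTransGen (reflTransGen_destandardize T)).symm.trans h).trans
      (SameStdOrder.of_reflTransGen (reflTransGen_destandardize T')))

theorem eq_destandardize_of_reflTransGen {T U : Cells lam → Fin n}
    (h : Relation.ReflTransGen TabStep T U) (hU : ¬ ∃ V, TabStep U V) :
    U = destandardize T :=
  eq_of_not_tabStep_of_sameStdOrder hU (not_tabStep_destandardize T)
    ((SameStdOrder.of_reflTransGen h).symm.trans
      (SameStdOrder.of_reflTransGen (reflTransGen_destandardize T)))

theorem destandardize_eq_self_iff {T : Cells lam → Fin n} : destandardize T = T ↔ IsQY T := by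
  refine ⟨fun h => h ▸ not_tabStep_iff_isQY.1 (not_tabStep_destandardize T), fun h => ?_⟩
  exact (eq_destandardize_of_reflTransGen .refl (not_tabStep_iff_isQY.2 h)).symm

theorem IsSSYT.isQY_of_le_length (hpos : ∀ x ∈ lam, 0 < x) (hn : n ≤ lam.length)
    {T : Cells lam → Fin n} (hT : IsSSYT T) : IsQY T := by
  have hcol : ∀ r, 0 < lam.get r := fun r => hpos _ (lam.get_mem r)
  let first : Fin lam.length → Fin n := fun r => T ⟨r, ⟨0, hcol r⟩⟩
  have hinj : Function.Injective first :=
    StrictMono.injective fun r r' hr => hT.2 r r' ⟨0, hcol r'⟩ (hcol r) hr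
  have hsurj : Function.Surjective first :=
    ((Fintype.bijective_iff_injective_and_card first).2
      ⟨hinj, by simpa using (Fintype.card_le_of_injective first hinj).antisymm (by simpa)⟩).2
  intro v x _ hv hmin
  obtain ⟨r, hr⟩ := hsurj v
  obtain ⟨r', hr'⟩ := hsurj ⟨v - 1, by omega⟩
  have hval : (first r' : ℕ) = v - 1 := by rw [hr']
  refine ⟨⟨r', ⟨0, hcol r'⟩⟩, by simp only [first] at hval; omega, ?_⟩
  simpa using hmin _ hr

theorem exists_isSSYT_ne_sameStdOrder (hne : lam ≠ []) (hpos : ∀ x ∈ lam, 0 < x)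
    (hn : lam.length < n) :
    ∃ T T' : Cells lam → Fin n, IsSSYT T ∧ IsSSYT T' ∧ T ≠ T' ∧ SameStdOrder T T' := by
  let row (k : ℕ) (hk : lam.length + k ≤ n) : Cells lam → Fin n := fun x => ⟨x.1 + k, by omega⟩
  have hrow : ∀ k hk, IsSSYT (row k hk) :=
    fun k hk => ⟨fun _ _ _ _ => le_rfl, fun _ _ _ _ hr => by simp [row]; omega⟩
  have h0 : 0 < lam.length := List.length_pos_iff.2 hne
  have hn0 : lam.length + 0 ≤ n := by omega
  refine ⟨row 0 hn0, row 1 hn, hrow 0 hn0, hrow 1 hn, fun h => ?_, fun x y => ?_⟩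
  · have := congrArg (fun T => (T ⟨⟨0, h0⟩, ⟨0, hpos _ (lam.get_mem _)⟩⟩ : ℕ)) h
    simp [row] at this
  · simp only [stdKey_lt_stdKey, row]
    omega

end Destandardization

theorem tableau_destandardization_general (n : ℕ) (lam : List ℕ) (hne : lam ≠ [])
    (hpos : ∀ x ∈ lam, 0 < x) :
    ∃ dst : {T : Cells lam → Fin n // IsSSYT T} → {T : Cells lam → Fin n // IsSSYT T},
      (∀ T, Relation.ReflTransGen TabStep T.val (dst T).val) ∧
      (∀ T, ¬ ∃ U : Cells lam → Fin n, TabStep (dst T).val U) ∧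
      (∀ T, ∀ U : Cells lam → Fin n, Relation.ReflTransGen TabStep T.val U →
        (¬ ∃ U' : Cells lam → Fin n, TabStep U U') → U = (dst T).val) ∧
      (∀ T, IsQY (dst T).val) ∧
      (∀ T, dst T = T ↔ IsQY T.val) ∧
      (∀ Q : {T : Cells lam → Fin n // IsSSYT T}, IsQY Q.val → ∃ T, dst T = Q) ∧
      (Function.Injective dst ↔ n ≤ lam.length) := by
  refine ⟨fun T => ⟨destandardize T.1, T.2.of_reflTransGen (reflTransGen_destandardize T.1)⟩,
    fun T => reflTransGen_destandardize T.1, fun T => not_tabStep_destandardize T.1,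
    fun T _ h hU => eq_destandardize_of_reflTransGen h hU,
    fun T => not_tabStep_iff_isQY.1 (not_tabStep_destandardize T.1),
    fun T => Subtype.ext_iff.trans destandardize_eq_self_iff,
    fun Q hQ => ⟨Q, Subtype.ext (destandardize_eq_self_iff.2 hQ)⟩, ⟨fun hinj => ?_, fun hn => ?_⟩⟩
  · by_contra! hlt
    obtain ⟨T, T', hT, hT', hTT', hsame⟩ := exists_isSSYT_ne_sameStdOrder hne hpos hlt
    exact hTT' (congrArg Subtype.val (@hinj ⟨T, hT⟩ ⟨T', hT'⟩
      (Subtype.ext (destandardize_eq_of_sameStdOrder hsame))))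
  · have hfix (T : {T : Cells lam → Fin n // IsSSYT T}) : destandardize T.1 = T.1 :=
      destandardize_eq_self_iff.2 (T.2.isQY_of_le_length hpos hn)
    intro T U h
    exact Subtype.ext ((hfix T).symm.trans ((congrArg Subtype.val h).trans (hfix U)))

/-- the destandardization map on semistandard Young tableaux is well defined
(every tableau reaches a unique tableau to which no decrement step applies), lands in the
quasi-Yamanouchi tableaux, fixes exactly the quasi-Yamanouchi tableaux, is surjective,
and is injective iff `n ≤ ℓ(λ)`. -/
theorem tableau_destandardization (n : ℕ) (lam : List ℕ) (hne : lam ≠ [])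
    (hpos : ∀ x ∈ lam, 0 < x) (hsort : List.Pairwise (· ≥ ·) lam) :
    ∃ dst : {T : Cells lam → Fin n // IsSSYT T} → {T : Cells lam → Fin n // IsSSYT T},
      (∀ T, Relation.ReflTransGen TabStep T.val (dst T).val) ∧
      (∀ T, ¬ ∃ U : Cells lam → Fin n, TabStep (dst T).val U) ∧
      (∀ T, ∀ U : Cells lam → Fin n, Relation.ReflTransGen TabStep T.val U →
        (¬ ∃ U' : Cells lam → Fin n, TabStep U U') → U = (dst T).val) ∧
      (∀ T, IsQY (dst T).val) ∧
      (∀ T, dst T = T ↔ IsQY T.val) ∧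
      (∀ Q : {T : Cells lam → Fin n // IsSSYT T}, IsQY Q.val → ∃ T, dst T = Q) ∧
      (Function.Injective dst ↔ n ≤ lam.length) :=
  tableau_destandardization_general n lam hne hpos

end SlidePaper
end

section
/- For strong compositions α and β and every n ≥ 1, the monomial quasisymmetric polynomials satisfy M_α(x_1,…,x_n) · M_β(x_1,…,x_n) = Σ_γ [γ | α ⧺ β] M_γ(x_1,…,x_n), where [γ | α ⧺ β] is the multiplicity of γ in the quasi-shuffle product α ⧺ β. -/
open scoped Classical

namespace SlidePaper

/-!
Write `M_α^{(j)}` for `M_α(x_j, …, x_{n-1})`. A monomial of `M_{a::α}^{(j)}` either puts its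
first part on `x_j` or avoids `x_j`, so `M_{a::α}^{(j)} = M_{a::α}^{(j+1)} + x_j^a M_α^{(j+1)}`.
Expanding both factors of `M_{a::α}^{(j)} M_{b::β}^{(j)}` this way gives four terms. By induction
at `j + 1`, the `x_j`-free term recombines the three branches of the quasi-shuffle recursion
evaluated in `M^{(j+1)}`, and the terms with `x_j^a`, `x_j^b`, `x_j^{a+b}` are those branches'
`x_j`-parts. The induction runs downward from `j = n`, where all nonempty `M_γ^{(n)}` vanish.
-/
def incSeqFrom (n j m : ℕ) : Finset (Fin m → Fin n) :=
  Finset.univ.filter fun i => StrictMono i ∧ ∀ t, j ≤ (i t : ℕ)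

/-- `M_α(x_j, …, x_{n-1})` (variables indexed from `0`). -/
noncomputable def MqsFrom (n j : ℕ) (α : List ℕ) : MvPolynomial (Fin n) ℤ :=
  ∑ i ∈ incSeqFrom n j α.length,
    ∏ t : Fin α.length, (MvPolynomial.X (i t) : MvPolynomial (Fin n) ℤ) ^ α.get t

theorem MqsFrom_zero (n : ℕ) (α : List ℕ) : MqsFrom n 0 α = Mqs n n α := by
  unfold MqsFrom incSeqFrom Mqs
  congr 1
  ext i
  simp

@[simp]
theorem MqsFrom_nil (n j : ℕ) : MqsFrom n j [] = 1 := by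
  simp [MqsFrom, incSeqFrom, Finset.filter_true_of_mem, Subsingleton.strictMono]

theorem incSeqFrom_succ_eq_empty {n j : ℕ} (h : n ≤ j) (m : ℕ) : incSeqFrom n j (m + 1) = ∅ :=
  Finset.filter_false_of_mem fun i _ hi => by
    have := (i 0).isLt
    have := hi.2 0
    omega

theorem filter_incSeqFrom_head_ne (n j m : ℕ) :
    (incSeqFrom n j (m + 1)).filter (fun i => (i 0 : ℕ) ≠ j) = incSeqFrom n (j + 1) (m + 1) := by
  ext i
  simp only [incSeqFrom, Finset.mem_filter, Finset.mem_univ, true_and]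
  constructor
  · rintro ⟨⟨hi, hle⟩, hne⟩
    exact ⟨hi, fun t => lt_of_lt_of_le (lt_of_le_of_ne (hle 0) (Ne.symm hne))
      (hi.monotone (Fin.zero_le t))⟩
  · rintro ⟨hi, hlt⟩
    exact ⟨⟨hi, fun t => Nat.le_of_succ_le (hlt t)⟩, Nat.ne_of_gt (hlt 0)⟩

theorem filter_incSeqFrom_head_eq {n j : ℕ} (hj : j < n) (m : ℕ) :
    (incSeqFrom n j (m + 1)).filter (fun i => (i 0 : ℕ) = j) =
      (incSeqFrom n (j + 1) m).image (Fin.cons ⟨j, hj⟩) := by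
  ext i
  simp only [incSeqFrom, Finset.mem_filter, Finset.mem_image, Finset.mem_univ, true_and]
  constructor
  · rintro ⟨⟨hi, -⟩, h0⟩
    refine ⟨Fin.tail i, ⟨hi.comp Fin.strictMono_succ, fun t => ?_⟩, ?_⟩
    · exact h0 ▸ Fin.lt_def.mp (hi (Fin.succ_pos t))
    · rw [show (⟨j, hj⟩ : Fin n) = i 0 from Fin.ext h0.symm, Fin.cons_self_tail]
  · rintro ⟨i, ⟨hi, hlt⟩, rfl⟩
    refine ⟨⟨Fin.strictMono_cons.mpr ⟨fun t => Fin.lt_def.mpr (hlt t), hi⟩, ?_⟩, rfl⟩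
    exact Fin.cases le_rfl fun t => Nat.le_of_succ_le (hlt t)

theorem MqsFrom_cons_of_le {n j : ℕ} (h : n ≤ j) (a : ℕ) (α : List ℕ) :
    MqsFrom n j (a :: α) = 0 := by
  change ∑ i ∈ incSeqFrom n j (α.length + 1), _ = _
  rw [incSeqFrom_succ_eq_empty h, Finset.sum_empty]

theorem MqsFrom_cons {n j : ℕ} (hj : j < n) (a : ℕ) (α : List ℕ) :
    MqsFrom n j (a :: α) =
      MqsFrom n (j + 1) (a :: α) + MvPolynomial.X ⟨j, hj⟩ ^ a * MqsFrom n (j + 1) α := by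
  change ∑ i ∈ incSeqFrom n j (α.length + 1), _ = _
  rw [← Finset.sum_filter_not_add_sum_filter _ (fun i => (i 0 : ℕ) = j),
    filter_incSeqFrom_head_ne, filter_incSeqFrom_head_eq hj,
    Finset.sum_image fun _ _ _ _ h => Fin.cons_right_injective _ h, MqsFrom, MqsFrom,
    Finset.mul_sum]
  congr 1
  exact Finset.sum_congr rfl fun i _ => Fin.prod_univ_succ (n := α.length) _

theorem qShuffle_nil_left (β : List ℕ) : qShuffle [] β = {β} := by
  simp [qShuffle]

theorem qShuffle_nil_right (α : List ℕ) : qShuffle α [] = {α} := by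
  cases α <;> simp [qShuffle]

theorem qShuffle_cons_cons (a b : ℕ) (α β : List ℕ) :
    qShuffle (a :: α) (b :: β) =
      ((qShuffle α (b :: β)).map (a :: ·)) + ((qShuffle (a :: α) β).map (b :: ·)) +
        ((qShuffle α β).map ((a + b) :: ·)) := by
  rw [qShuffle]

theorem MqsFrom_mul (n j : ℕ) (α β : List ℕ) :
    MqsFrom n j α * MqsFrom n j β = ((qShuffle α β).map (MqsFrom n j)).sum := by
  match α, β with
  | [], β => simp [qShuffle_nil_left]
  | α, [] => simp [qShuffle_nil_right]
  | a :: α, b :: β =>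
    rw [qShuffle_cons_cons]
    simp only [Multiset.map_add, Multiset.map_map, Function.comp_def, Multiset.sum_add]
    rcases le_or_gt n j with hj | hj
    · simp [MqsFrom_cons_of_le hj]
    have ih (α β : List ℕ) := MqsFrom_mul n (j + 1) α β
    have ih_cons := ih (a :: α) (b :: β)
    rw [qShuffle_cons_cons] at ih_cons
    simp only [Multiset.map_add, Multiset.map_map, Function.comp_def, Multiset.sum_add] at ih_cons
    simp only [MqsFrom_cons hj, Multiset.sum_map_add, Multiset.sum_map_mul_left]
    set x : MvPolynomial (Fin n) ℤ := MvPolynomial.X ⟨j, hj⟩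
    linear_combination ih_cons + x ^ a * ih α (b :: β) + x ^ b * ih (a :: α) β +
      x ^ a * x ^ b * ih α β
termination_by n - j

theorem monomialQsym_mul_quasiShuffle_general (α β : List ℕ) (n : ℕ) :
    Mqs n n α * Mqs n n β = ((qShuffle α β).map (fun γ => Mqs n n γ)).sum := by
  simpa only [MqsFrom_zero] using MqsFrom_mul n 0 α β

/-- the monomial quasisymmetric polynomials multiply by the quasi-shuffle
product: `M_α · M_β = Σ_γ [γ ∣ α ⧺ β] M_γ`. -/
theorem monomialQsym_mul_quasiShuffle (α β : List ℕ) (hα : ∀ x ∈ α, 0 < x)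
    (hβ : ∀ x ∈ β, 0 < x) (n : ℕ) (hn : 1 ≤ n) :
    Mqs n n α * Mqs n n β = ((qShuffle α β).map (fun γ => Mqs n n γ)).sum :=
  monomialQsym_mul_quasiShuffle_general α β n

end SlidePaper
end

section
/- Let α and β be strong compositions and let A and B be any words over the positive integers with no letter in common such that Des(A) = α and Des(B) = β. Then for every n ≥ 1, F_α(x_1,…,x_n) · F_β(x_1,…,x_n) = Σ_{C ∈ A ⧢ B} F_{Des(C)}(x_1,…,x_n). -/
open scoped Classical

namespace SlidePaper

/-! `F_{Des(W)}(x_1, …, x_n)` is the generating function of the index sequences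
`i_1 ≤ ⋯ ≤ i_k` for which the pairs `(i_1, w_1), …, (i_k, w_k)` increase weakly in the
lexicographic order (this is `compatSum X ⊥ W`). Merging, in lexicographic order, the pairs of
such a sequence for `A` with those of one for `B` gives such a sequence for exactly one shuffle
of `A` and `B`: no ties occur because `A` and `B` share no letter. The smaller of the two first
pairs decides whether that shuffle begins with the first letter of `A` or of `B`, which matches
the recursion defining `shuffles`. -/

section CompatibleSequences

variable {ι R : Type*} [LinearOrder ι] [Fintype ι] [CommSemiring R] (f : ι → R)

noncomputable def compatSum : WithBot (ι ×ₗ ℕ) → List ℕ → R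
  | _, [] => 1
  | s, x :: W => ∑ u, if s ≤ ↑(toLex (u, x)) then f u * compatSum ↑(toLex (u, x)) W else 0

lemma compatSum_cons (s : WithBot (ι ×ₗ ℕ)) (x : ℕ) (W : List ℕ) :
    compatSum f s (x :: W) =
      ∑ u, if s ≤ ↑(toLex (u, x)) then f u * compatSum f ↑(toLex (u, x)) W else 0 := rfl

lemma sum_map_compatSum_cons (s : WithBot (ι ×ₗ ℕ)) (x : ℕ) (M : Multiset (List ℕ)) :
    ((M.map (x :: ·)).map (compatSum f s)).sum =
      ∑ u, if s ≤ ↑(toLex (u, x)) then f u * (M.map (compatSum f ↑(toLex (u, x)))).sum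
        else 0 := by
  simp only [Multiset.map_map, Function.comp_def, compatSum_cons, Multiset.sum_map_sum]
  refine Finset.sum_congr rfl fun u _ => ?_
  split_ifs <;> simp [Multiset.sum_map_mul_left]

lemma ite_mul_ite_of_ne {α : Type*} [LinearOrder α] {s a b : α} (hab : a ≠ b) (p q : R) :
    (if s ≤ a then p else 0) * (if s ≤ b then q else 0) =
      (if s ≤ a then p * (if a ≤ b then q else 0) else 0) +
        (if s ≤ b then q * (if b ≤ a then p else 0) else 0) := by
  rcases lt_or_gt_of_ne hab with h | h
  · by_cases hs : s ≤ a
    · simp [hs, h.le, not_le.mpr h, hs.trans h.le]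
    · by_cases hs' : s ≤ b <;> simp [hs, hs', not_le.mpr h]
  · by_cases hs : s ≤ b
    · simp [hs, h.le, not_le.mpr h, hs.trans h.le, mul_comm]
    · by_cases hs' : s ≤ a <;> simp [hs, hs', not_le.mpr h]

lemma sum_sum_ite_le_eq_mul_compatSum_cons (s : WithBot (ι ×ₗ ℕ)) (x y : ℕ) (A B : List ℕ) :
    ∑ u, ∑ w, (if s ≤ ↑(toLex (u, x)) then f u * compatSum f ↑(toLex (u, x)) A *
        (if (↑(toLex (u, x)) : WithBot (ι ×ₗ ℕ)) ≤ ↑(toLex (w, y))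
          then f w * compatSum f ↑(toLex (w, y)) B else 0) else 0) =
      ∑ u, if s ≤ ↑(toLex (u, x)) then
        f u * (compatSum f ↑(toLex (u, x)) A * compatSum f ↑(toLex (u, x)) (y :: B)) else 0 := by
  refine Finset.sum_congr rfl fun u _ => ?_
  split_ifs
  · rw [← Finset.mul_sum, compatSum_cons, mul_assoc]
  · exact Finset.sum_const_zero

theorem compatSum_mul_compatSum (s : WithBot (ι ×ₗ ℕ)) {A B : List ℕ} (hAB : ∀ x ∈ A, x ∉ B) :
    compatSum f s A * compatSum f s B = ((shuffles A B).map (compatSum f s)).sum := by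
  induction A, B using shuffles.induct generalizing s with
  | case1 B => simp [compatSum, shuffles]
  | case2 A hA =>
    cases A with
    | nil => exact absurd rfl hA
    | cons x A => simp [compatSum, shuffles]
  | case3 x A y B ih₁ ih₂ =>
    have hxy : x ≠ y := fun h => hAB x (by simp) (by simp [h])
    have hne : ∀ u w : ι, (↑(toLex (u, x)) : WithBot (ι ×ₗ ℕ)) ≠ ↑(toLex (w, y)) := by
      simp [hxy]
    rw [shuffles, Multiset.map_add, Multiset.sum_add, sum_map_compatSum_cons,
      sum_map_compatSum_cons, compatSum_cons, compatSum_cons, Finset.sum_mul_sum]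
    simp only [ite_mul_ite_of_ne (hne _ _), Finset.sum_add_distrib]
    conv_lhs => enter [2]; rw [Finset.sum_comm]
    rw [sum_sum_ite_le_eq_mul_compatSum_cons, sum_sum_ite_le_eq_mul_compatSum_cons]
    simp only [ih₁ _ fun z hz => hAB z (List.mem_cons_of_mem x hz),
      mul_comm (compatSum f _ B), ih₂ _ fun z hz hzB => hAB z hz (List.mem_cons_of_mem y hzB)]

end CompatibleSequences

lemma refines_cons_cons_iff {a b : ℕ} {α γ : List ℕ} (ha : 0 < a) (hγ : ∀ x ∈ γ, 0 < x) :
    Refines (b :: γ) (a :: α) ↔ (b = a ∧ Refines γ α) ∨ (b < a ∧ Refines γ ((a - b) :: α)) := by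
  constructor
  · rintro ⟨_ | ⟨_ | ⟨c, L₀⟩, L⟩, hβ, hα⟩
    · simp at hα
    · simp only [List.map_cons, List.sum_nil, List.cons.injEq] at hα
      omega
    · simp only [List.map_cons, List.sum_cons, List.cons.injEq] at hα
      simp only [List.flatten_cons, List.cons_append, List.cons.injEq] at hβ
      obtain ⟨rfl, rfl⟩ := hβ
      obtain ⟨rfl, rfl⟩ := hα
      rcases eq_or_ne L₀ [] with rfl | hL₀
      · exact Or.inl ⟨by simp, L, rfl, rfl⟩
      · have : 0 < L₀.sum := by
          obtain ⟨x, hx⟩ := List.exists_mem_of_ne_nil L₀ hL₀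
          exact (hγ x (List.mem_append_left _ hx)).trans_le (List.le_sum_of_mem hx)
        exact Or.inr ⟨by omega, L₀ :: L, rfl, by simp⟩
  · rintro (⟨rfl, L, rfl, rfl⟩ | ⟨hba, _ | ⟨L₀, L⟩, hγ, hα⟩)
    · exact ⟨[b] :: L, rfl, rfl⟩
    · simp at hα
    · simp only [List.map_cons, List.cons.injEq] at hα
      refine ⟨(b :: L₀) :: L, by simp [← hγ], ?_⟩
      simp only [List.map_cons, List.sum_cons, hα.1, hα.2, List.cons.injEq, and_true]
      omega

noncomputable def refinements (α : List ℕ) : Finset (List ℕ) :=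
  (Finset.univ.filter fun c : Composition α.sum => Refines c.blocks α).image Composition.blocks

lemma mem_refinements {α β : List ℕ} :
    β ∈ refinements α ↔ Refines β α ∧ ∀ x ∈ β, 0 < x := by
  simp only [refinements, Finset.mem_image, Finset.mem_filter, Finset.mem_univ, true_and]
  constructor
  · rintro ⟨c, hc, rfl⟩
    exact ⟨hc, fun x hx => c.blocks_pos hx⟩
  · rintro ⟨hβ, hpos⟩
    exact ⟨⟨β, hpos _, hβ.sum_eq⟩, hβ, rfl⟩

lemma refinements_nil : refinements [] = {[]} := by
  ext (_ | ⟨b, β⟩)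
  · simp only [Finset.mem_singleton, iff_true, mem_refinements, List.not_mem_nil,
      IsEmpty.forall_iff, implies_true, and_true]
    exact ⟨[], rfl, rfl⟩
  · simp only [Finset.mem_singleton, reduceCtorEq, iff_false, mem_refinements,
      List.forall_mem_cons, not_and]
    intro h hb _
    have := h.sum_eq
    simp only [List.sum_cons, List.sum_nil] at this
    omega

lemma nil_notMem_refinements {a : ℕ} (ha : 0 < a) (α : List ℕ) : [] ∉ refinements (a :: α) := by
  intro h
  have := (mem_refinements.mp h).1.sum_eq
  simp only [List.sum_nil, List.sum_cons] at this
  omega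

lemma cons_mem_refinements_iff {a b : ℕ} {α γ : List ℕ} (ha : 0 < a) :
    b :: γ ∈ refinements (a :: α) ↔
      0 < b ∧ ((b = a ∧ γ ∈ refinements α) ∨ (b < a ∧ γ ∈ refinements ((a - b) :: α))) := by
  simp only [mem_refinements, List.forall_mem_cons]
  constructor
  · rintro ⟨h, hb, hγ⟩
    rcases (refines_cons_cons_iff ha hγ).mp h with h | h
    · exact ⟨hb, Or.inl ⟨h.1, h.2, hγ⟩⟩
    · exact ⟨hb, Or.inr ⟨h.1, h.2, hγ⟩⟩
  · rintro ⟨hb, ⟨h₁, h₂, hγ⟩ | ⟨h₁, h₂, hγ⟩⟩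
    · exact ⟨(refines_cons_cons_iff ha hγ).mpr (Or.inl ⟨h₁, h₂⟩), hb, hγ⟩
    · exact ⟨(refines_cons_cons_iff ha hγ).mpr (Or.inr ⟨h₁, h₂⟩), hb, hγ⟩

lemma refinements_one_cons (α : List ℕ) :
    refinements (1 :: α) = (refinements α).image (1 :: ·) := by
  ext (_ | ⟨b, γ⟩)
  · simp [nil_notMem_refinements one_pos]
  · rw [cons_mem_refinements_iff one_pos, Finset.mem_image]
    constructor
    · rintro ⟨hb, ⟨rfl, hγ⟩ | ⟨hb', -⟩⟩
      · exact ⟨γ, hγ, rfl⟩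
      · omega
    · rintro ⟨γ, hγ, h⟩
      obtain ⟨rfl, rfl⟩ := List.cons_eq_cons.mp h
      exact ⟨one_pos, Or.inl ⟨rfl, hγ⟩⟩

lemma modifyHead_succ_injective : Function.Injective (List.modifyHead (· + 1)) := by
  rintro (_ | ⟨b, β⟩) (_ | ⟨c, γ⟩) h <;> simp_all

lemma exists_modifyHead_succ_eq_cons {S : Finset (List ℕ)} {b : ℕ} {γ : List ℕ} :
    (∃ β ∈ S, β.modifyHead (· + 1) = b :: γ) ↔ 0 < b ∧ (b - 1) :: γ ∈ S := by
  constructor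
  · rintro ⟨_ | ⟨c, δ⟩, hS, h⟩
    · simp at h
    · obtain ⟨rfl, rfl⟩ := List.cons_eq_cons.mp h
      simpa using hS
  · rintro ⟨hb, hS⟩
    refine ⟨_, hS, ?_⟩
    simp only [List.modifyHead_cons, List.cons.injEq, and_true]
    omega

lemma refinements_succ_cons {a : ℕ} (ha : 0 < a) (α : List ℕ) :
    refinements ((a + 1) :: α) =
      (refinements (a :: α)).image (1 :: ·) ∪
        (refinements (a :: α)).image (List.modifyHead (· + 1)) := by
  ext (_ | ⟨b, γ⟩)
  · simp [nil_notMem_refinements ha, nil_notMem_refinements a.succ_pos]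
  · rw [cons_mem_refinements_iff a.succ_pos, Finset.mem_union]
    simp only [Finset.mem_image, exists_modifyHead_succ_eq_cons]
    rcases b with _ | _ | c
    · simp
    · simp [cons_mem_refinements_iff ha, ha, ha.ne']
    · simp [cons_mem_refinements_iff ha]

lemma disjoint_image_one_cons_image_modifyHead_succ {a : ℕ} (ha : 0 < a) (α : List ℕ) :
    Disjoint ((refinements (a :: α)).image (1 :: ·))
      ((refinements (a :: α)).image (List.modifyHead (· + 1))) := by
  rw [Finset.disjoint_left]
  rintro _ h₁ h₂
  obtain ⟨γ, -, rfl⟩ := Finset.mem_image.mp h₁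
  rw [Finset.mem_image, exists_modifyHead_succ_eq_cons] at h₂
  simp [cons_mem_refinements_iff ha] at h₂

open MvPolynomial

noncomputable def mqsFrom (n v : ℕ) (β : List ℕ) : MvPolynomial (Fin n) ℤ :=
  ∑ i : Fin β.length → Fin n with StrictMono i ∧ ∀ t, v ≤ (i t).val,
    ∏ t, (X (i t) : MvPolynomial (Fin n) ℤ) ^ β.get t

lemma mqsFrom_nil (n v : ℕ) : mqsFrom n v [] = 1 := by
  simp [mqsFrom, Subsingleton.strictMono]

lemma mqsFrom_cons (n v b : ℕ) (β : List ℕ) :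
    mqsFrom n v (b :: β) =
      ∑ u : Fin n with v ≤ u.val, (X u : MvPolynomial (Fin n) ℤ) ^ b * mqsFrom n (u.val + 1) β := by
  rw [mqsFrom, Finset.sum_filter, Finset.sum_filter]
  change ∑ i : Fin (β.length + 1) → Fin n, _ = _
  rw [← (Fin.consEquiv fun _ : Fin (β.length + 1) => Fin n).sum_comp, Fintype.sum_prod_type]
  refine Finset.sum_congr rfl fun u _ => ?_
  simp only [mqsFrom, Finset.sum_filter, Finset.mul_sum, mul_ite, mul_zero]
  by_cases hu : v ≤ u.val
  · rw [if_pos hu]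
    refine Finset.sum_congr rfl fun i _ => ?_
    have hcond : (StrictMono (Fin.cons u i : Fin (β.length + 1) → Fin n) ∧
        ∀ t, v ≤ ((Fin.cons u i : Fin (β.length + 1) → Fin n) t).val) ↔
          StrictMono i ∧ ∀ t, u.val + 1 ≤ (i t).val := by
      simp only [Fin.strictMono_cons, Fin.forall_fin_succ, Fin.cons_zero, Fin.cons_succ,
        Fin.lt_def, Nat.succ_le_iff]
      exact ⟨fun ⟨⟨hlt, hi⟩, _⟩ => ⟨hi, hlt⟩,
        fun ⟨hi, hlt⟩ => ⟨⟨hlt, hi⟩, hu, fun j => hu.trans (hlt j).le⟩⟩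
    exact if_congr hcond (Fin.prod_univ_succ _) rfl
  · rw [if_neg hu]
    exact Finset.sum_eq_zero fun i _ => if_neg fun h => hu (h.2 0)

lemma mqsFrom_eq_zero {n : ℕ} (v : ℕ) {β : List ℕ} (h : n < β.length) : mqsFrom n v β = 0 := by
  refine Finset.sum_eq_zero fun i hi => absurd ?_ h.not_ge
  simpa using Fintype.card_le_of_injective i (Finset.mem_filter.mp hi).2.1.injective

lemma Mqs_eq_mqsFrom (n : ℕ) (β : List ℕ) : Mqs n n β = mqsFrom n 0 β := by
  simp [Mqs, mqsFrom]

lemma sum_X_mul_mqsFrom (n v b : ℕ) (γ : List ℕ) :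
    ∑ u : Fin n with v ≤ u.val, X u * mqsFrom n u (b :: γ) =
      mqsFrom n v (1 :: b :: γ) + mqsFrom n v ((b + 1) :: γ) := by
  have hsplit : ∀ u : Fin n, Finset.univ.filter (fun w : Fin n => u.val ≤ w.val) =
      insert u (Finset.univ.filter fun w : Fin n => u.val + 1 ≤ w.val) := by
    intro u
    ext w
    simp only [Finset.mem_filter, Finset.mem_univ, true_and, Finset.mem_insert, Fin.ext_iff]
    omega
  rw [mqsFrom_cons, mqsFrom_cons, ← Finset.sum_add_distrib]
  refine Finset.sum_congr rfl fun u _ => ?_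
  rw [mqsFrom_cons, hsplit, Finset.sum_insert (by simp), ← mqsFrom_cons]
  ring

noncomputable def fqsFrom (n v : ℕ) (α : List ℕ) : MvPolynomial (Fin n) ℤ :=
  ∑ β ∈ refinements α, mqsFrom n v β

lemma Fqs_eq_fqsFrom (n : ℕ) (α : List ℕ) : Fqs n n α = fqsFrom n 0 α := by
  rw [Fqs, fqsFrom, refinements, Finset.sum_image fun _ _ _ _ h => Composition.ext h,
    ← Finset.filter_filter]
  simp only [Mqs_eq_mqsFrom]
  exact Finset.sum_filter_of_ne fun c _ hc => not_lt.mp fun h => hc (mqsFrom_eq_zero 0 h)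

lemma fqsFrom_nil (n v : ℕ) : fqsFrom n v [] = 1 := by
  rw [fqsFrom, refinements_nil, Finset.sum_singleton, mqsFrom_nil]

lemma fqsFrom_one_cons (n v : ℕ) (α : List ℕ) :
    fqsFrom n v (1 :: α) = ∑ u : Fin n with v ≤ u.val, X u * fqsFrom n (u.val + 1) α := by
  rw [fqsFrom, refinements_one_cons, Finset.sum_image List.cons_injective.injOn]
  simp only [mqsFrom_cons, pow_one, fqsFrom, Finset.mul_sum]
  exact Finset.sum_comm

lemma fqsFrom_succ_cons {a : ℕ} (ha : 0 < a) (n v : ℕ) (α : List ℕ) :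
    fqsFrom n v ((a + 1) :: α) = ∑ u : Fin n with v ≤ u.val, X u * fqsFrom n u (a :: α) := by
  rw [fqsFrom, refinements_succ_cons ha,
    Finset.sum_union (disjoint_image_one_cons_image_modifyHead_succ ha α),
    Finset.sum_image List.cons_injective.injOn, Finset.sum_image modifyHead_succ_injective.injOn,
    ← Finset.sum_add_distrib]
  simp only [fqsFrom, Finset.mul_sum]
  rw [Finset.sum_comm]
  refine Finset.sum_congr rfl fun β hβ => ?_
  obtain ⟨b, γ, rfl⟩ :=
    List.exists_cons_of_ne_nil (ne_of_mem_of_not_mem hβ (nil_notMem_refinements ha α))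
  rw [sum_X_mul_mqsFrom]
  rfl

lemma exists_runsWeak_cons (y : ℕ) (W : List ℕ) :
    ∃ r rs, runsWeak (y :: W) = (y :: r) :: rs := by
  induction W generalizing y with
  | nil => exact ⟨[], [], rfl⟩
  | cons z W ih =>
    obtain ⟨r, rs, h⟩ := ih z
    by_cases hyz : y ≤ z
    · exact ⟨z :: r, rs, by rw [runsWeak.eq_2 _ _ _ _ _ h, if_pos hyz]⟩
    · exact ⟨[], (z :: r) :: rs, by rw [runsWeak.eq_2 _ _ _ _ _ h, if_neg hyz]⟩

lemma exists_desComp_cons (y : ℕ) (W : List ℕ) : ∃ d ds, desComp (y :: W) = (d + 1) :: ds := by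
  obtain ⟨r, rs, h⟩ := exists_runsWeak_cons y W
  exact ⟨r.length, rs.map List.length, by simp [desComp, h]⟩

lemma desComp_cons_cons (x y : ℕ) (W : List ℕ) :
    desComp (x :: y :: W) =
      if x ≤ y then (desComp (y :: W)).modifyHead (· + 1) else 1 :: desComp (y :: W) := by
  obtain ⟨r, rs, h⟩ := exists_runsWeak_cons y W
  rw [desComp, desComp, runsWeak.eq_2 _ _ _ _ _ h, h]
  split_ifs <;> simp

theorem compatSum_X_eq_fqsFrom {n : ℕ} (x : ℕ) (W : List ℕ) (s : WithBot (Fin n ×ₗ ℕ)) (v : ℕ)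
    (hs : ∀ u : Fin n, s ≤ ↑(toLex (u, x)) ↔ v ≤ u.val) :
    compatSum X s (x :: W) = fqsFrom n v (desComp (x :: W)) := by
  induction W generalizing s x v with
  | nil =>
    rw [compatSum_cons, show desComp [x] = [1] from rfl, fqsFrom_one_cons, Finset.sum_filter]
    simp only [hs, compatSum, fqsFrom_nil]
  | cons y W ih =>
    have hstep : ∀ u : Fin n, compatSum X ↑(toLex (u, x)) (y :: W) =
        fqsFrom n (if x ≤ y then u.val else u.val + 1) (desComp (y :: W)) := fun u =>
      ih y _ _ fun w => by
        simp only [WithBot.coe_le_coe, Prod.Lex.toLex_le_toLex, Fin.lt_def, Fin.ext_iff]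
        split_ifs <;> omega
    obtain ⟨d, ds, hd⟩ := exists_desComp_cons y W
    rw [compatSum_cons, desComp_cons_cons, hd,
      Finset.sum_congr rfl fun u _ => by rw [hstep u, hd]]
    split_ifs
    · rw [List.modifyHead_cons, fqsFrom_succ_cons d.succ_pos, Finset.sum_filter]
      simp only [hs]
    · rw [fqsFrom_one_cons, Finset.sum_filter]
      simp only [hs]

lemma Fqs_desComp_eq_compatSum (n : ℕ) (W : List ℕ) : Fqs n n (desComp W) = compatSum X ⊥ W := by
  rw [Fqs_eq_fqsFrom]
  cases W with
  | nil => rw [show desComp [] = [] from rfl, fqsFrom_nil, compatSum]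
  | cons x W => exact (compatSum_X_eq_fqsFrom x W ⊥ 0 fun u => by simp).symm

theorem fundamentalQsym_mul_shuffle_general (A B : List ℕ) (hdisj : ∀ x ∈ A, x ∉ B) (α β : List ℕ)
    (hα : desComp A = α) (hβ : desComp B = β) (n : ℕ) :
    Fqs n n α * Fqs n n β = ((shuffles A B).map (fun C => Fqs n n (desComp C))).sum := by
  subst hα hβ
  simp only [Fqs_desComp_eq_compatSum]
  exact compatSum_mul_compatSum _ ⊥ hdisj

/-- for words `A`, `B` with no common letter and `Des(A) = α`, `Des(B) = β`,
`F_α · F_β = Σ_{C ∈ A ⧢ B} F_{Des(C)}` in any number of variables. -/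
theorem fundamentalQsym_mul_shuffle (A B : List ℕ) (hA : ∀ x ∈ A, 0 < x)
    (hB : ∀ x ∈ B, 0 < x) (hdisj : ∀ x ∈ A, x ∉ B) (α β : List ℕ)
    (hα : desComp A = α) (hβ : desComp B = β) (n : ℕ) (hn : 1 ≤ n) :
    Fqs n n α * Fqs n n β = ((shuffles A B).map (fun C => Fqs n n (desComp C))).sum :=
  fundamentalQsym_mul_shuffle_general A B hdisj α β hα hβ n

end SlidePaper
end

section
/- Let A and B be words over the positive integers with no letter in common, and set α = Des(A), β = Des(B) and ζ(α,β) = min(|α| + ℓ(β), ℓ(α) + |β|), where |·| is the sum of the parts and ℓ(·) the number of parts. Then there exists C ∈ A ⧢ B with ℓ(Des(C)) = ζ(α,β), and every D ∈ A ⧢ B satisfies ℓ(Des(D)) ≤ ζ(α,β). -/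
open scoped Classical

namespace SlidePaper

/-!
Count the runs of a word `D` as the strict descents of `l :: D`, for a letter `l` above all
letters in sight; then `ℓ(Des A)` is the number of descents of `l :: A` and `|Des A| = |A|`.
A letter of `B` inserted into a word creates at most one new descent, so every shuffle has at
most `desc(l :: A) + |B|` descents, and symmetrically. When `A` and `B` share no letter, the
shuffle built greedily from the left, taking the larger of the two next letters unless only
the smaller one lies below the previous letter, attains the smaller of the two bounds.
-/

lemma shuffles_nil_left (B : List ℕ) : shuffles [] B = {B} := by
  rw [shuffles]

lemma shuffles_nil_right (A : List ℕ) : shuffles A [] = {A} := by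
  cases A <;> simp [shuffles]

lemma shuffles_cons_cons (x y : ℕ) (A B : List ℕ) :
    shuffles (x :: A) (y :: B) =
      (shuffles A (y :: B)).map (x :: ·) + (shuffles (x :: A) B).map (y :: ·) := by
  rw [shuffles]

lemma shuffles_comm (A B : List ℕ) : shuffles A B = shuffles B A := by
  induction A, B using shuffles.induct with
  | case1 B => rw [shuffles_nil_left, shuffles_nil_right]
  | case2 A _ => rw [shuffles_nil_left, shuffles_nil_right]
  | case3 a A b B ih₁ ih₂ => rw [shuffles_cons_cons, shuffles_cons_cons, ih₁, ih₂, add_comm]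

lemma perm_append_of_mem_shuffles {A B D : List ℕ} (hD : D ∈ shuffles A B) :
    D.Perm (A ++ B) := by
  induction A, B using shuffles.induct generalizing D with
  | case1 B => simp_all [shuffles_nil_left]
  | case2 A _ => simp_all [shuffles_nil_right]
  | case3 a A b B ih₁ ih₂ =>
    rw [shuffles_cons_cons] at hD
    rcases Multiset.mem_add.1 hD with h | h <;> obtain ⟨E, hE, rfl⟩ := Multiset.mem_map.1 h
    · exact (ih₁ hE).cons a
    · exact ((ih₂ hE).cons b).trans List.perm_middle.symm

lemma runsWeak_cons_cons (x y : ℕ) (t : List ℕ) :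
    ∃ r rs, runsWeak (y :: t) = r :: rs ∧
      runsWeak (x :: y :: t) = if x ≤ y then (x :: r) :: rs else [x] :: r :: rs := by
  obtain ⟨r, rs, h⟩ : ∃ r rs, runsWeak (y :: t) = r :: rs := by
    rcases t with _ | ⟨w, t⟩
    · exact ⟨[y], [], rfl⟩
    · obtain ⟨r, rs, -, h⟩ := runsWeak_cons_cons y w t
      rw [h]
      split <;> simp
  exact ⟨r, rs, h, runsWeak.eq_2 x r rs y t h⟩

lemma flatten_runsWeak (l : List ℕ) : (runsWeak l).flatten = l := by
  induction l with
  | nil => rfl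
  | cons x t ih =>
    rcases t with _ | ⟨y, t⟩
    · rfl
    · obtain ⟨r, rs, h, h'⟩ := runsWeak_cons_cons x y t
      rw [h] at ih
      rw [h']
      split <;> simp only [List.flatten_cons, List.cons_append, List.nil_append] at ih ⊢ <;>
        rw [ih]

lemma sum_desComp (l : List ℕ) : (desComp l).sum = l.length := by
  rw [desComp, ← List.length_flatten, flatten_runsWeak]

def descents : List ℕ → ℕ
  | x :: y :: t => (if y < x then 1 else 0) + descents (y :: t)
  | _ => 0

@[simp] lemma descents_singleton (x : ℕ) : descents [x] = 0 := rfl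

lemma descents_cons_cons (x y : ℕ) (t : List ℕ) :
    descents (x :: y :: t) = (if y < x then 1 else 0) + descents (y :: t) := rfl

lemma descents_cons_le_length (l : ℕ) (D : List ℕ) : descents (l :: D) ≤ D.length := by
  induction D generalizing l with
  | nil => simp
  | cons x t ih =>
    rw [descents_cons_cons, List.length_cons]
    have := ih x
    split <;> omega

/-- A letter `l` larger than every letter of `D` makes the first run of `D` start with a
descent, so that every run of `D` starts with one. -/
lemma length_desComp_eq_descents {l : ℕ} {D : List ℕ} (hD : ∀ x ∈ D, x < l) :
    (desComp D).length = descents (l :: D) := by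
  induction D with
  | nil => rfl
  | cons x t ih =>
    rcases t with _ | ⟨y, t⟩
    · simp [desComp, runsWeak, descents_cons_cons, hD x (by simp)]
    · obtain ⟨r, rs, h, h'⟩ := runsWeak_cons_cons x y t
      have ih := ih fun z hz => hD z (List.mem_cons_of_mem x hz)
      simp only [desComp, h, List.length_map, List.length_cons] at ih
      simp only [desComp, h', descents_cons_cons, hD x (by simp), hD y (by simp),
        if_true] at ih ⊢
      split <;> simp_all; omega

lemma descents_cons_le_of_mem_shuffles_left {A B D : List ℕ} (hD : D ∈ shuffles A B) (l : ℕ) :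
    descents (l :: D) ≤ descents (l :: A) + B.length := by
  induction A, B using shuffles.induct generalizing D l with
  | case1 B => simp_all [shuffles_nil_left, descents_cons_le_length]
  | case2 A _ => simp_all [shuffles_nil_right]
  | case3 a A b B ih₁ ih₂ =>
    rw [shuffles_cons_cons] at hD
    rcases Multiset.mem_add.1 hD with h | h <;> obtain ⟨E, hE, rfl⟩ := Multiset.mem_map.1 h
    · have := ih₁ hE a
      simp only [descents_cons_cons, List.length_cons] at this ⊢
      omega
    · -- a descent `l > b` before `b > a` forces the descent `l > a`
      have := ih₂ hE b
      simp only [descents_cons_cons, List.length_cons] at this ⊢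
      split_ifs at this ⊢ <;> omega

lemma descents_cons_le_of_mem_shuffles {A B D : List ℕ} (hD : D ∈ shuffles A B) (l : ℕ) :
    descents (l :: D) ≤ min (descents (l :: A) + B.length) (descents (l :: B) + A.length) :=
  le_min (descents_cons_le_of_mem_shuffles_left hD l)
    (descents_cons_le_of_mem_shuffles_left (shuffles_comm A B ▸ hD) l)

lemma exists_mem_shuffles_min_le_descents {A B : List ℕ} (hAB : ∀ x ∈ A, x ∉ B) (l : ℕ) :
    ∃ C ∈ shuffles A B,
      min (descents (l :: A) + B.length) (descents (l :: B) + A.length) ≤ descents (l :: C) := by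
  induction A, B using shuffles.induct generalizing l with
  | case1 B => exact ⟨B, by simp [shuffles_nil_left], by simp⟩
  | case2 A _ => exact ⟨A, by simp [shuffles_nil_right], by simp⟩
  | case3 a A b B ih₁ ih₂ =>
    have hab : a ≠ b := fun h => hAB a (by simp) (by simp [h])
    obtain ⟨C₁, hC₁, h₁⟩ := ih₁ (fun x hx => hAB x (List.mem_cons_of_mem a hx)) a
    obtain ⟨C₂, hC₂, h₂⟩ := ih₂ (fun x hx hxB => hAB x hx (List.mem_cons_of_mem b hxB)) b
    simp only [descents_cons_cons, List.length_cons] at h₁ h₂ ⊢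
    -- start with the larger of `a` and `b`, unless only the smaller one lies below `l`
    by_cases h : b < a ∧ (b < l → a < l) ∨ a < l ∧ l ≤ b
    · refine ⟨a :: C₁, ?_, ?_⟩
      · rw [shuffles_cons_cons]; exact Multiset.mem_add.2 (.inl (Multiset.mem_map_of_mem _ hC₁))
      · rw [descents_cons_cons]
        split_ifs at h h₁ ⊢ <;> omega
    · refine ⟨b :: C₂, ?_, ?_⟩
      · rw [shuffles_cons_cons]; exact Multiset.mem_add.2 (.inr (Multiset.mem_map_of_mem _ hC₂))
      · rw [descents_cons_cons]
        split_ifs at h h₂ ⊢ <;> omega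

theorem shuffle_max_descents_general (A B : List ℕ)
    (hdisj : ∀ x ∈ A, x ∉ B) (α β : List ℕ) (hα : desComp A = α) (hβ : desComp B = β)
    (z : ℕ) (hz : z = min (α.sum + β.length) (α.length + β.sum)) :
    (∃ C ∈ shuffles A B, (desComp C).length = z) ∧
    ∀ D ∈ shuffles A B, (desComp D).length ≤ z := by
  obtain ⟨l, hl⟩ : ∃ l, ∀ x ∈ A ++ B, x < l :=
    ⟨(A ++ B).sum + 1, fun x hx => Nat.lt_succ_of_le (List.le_sum_of_mem hx)⟩
  have hlen : ∀ D, (∀ x ∈ D, x ∈ A ++ B) → (desComp D).length = descents (l :: D) :=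
    fun D hD => length_desComp_eq_descents fun x hx => hl x (hD x hx)
  have hz' : z = min (descents (l :: A) + B.length) (descents (l :: B) + A.length) := by
    rw [hz, ← hα, ← hβ, sum_desComp, sum_desComp, hlen A fun _ => List.mem_append_left B,
      hlen B fun _ => List.mem_append_right A]
    omega
  have hlen_shuffle : ∀ D ∈ shuffles A B, (desComp D).length = descents (l :: D) :=
    fun D hD => hlen D fun x hx => (perm_append_of_mem_shuffles hD).subset hx
  obtain ⟨C, hC, hCz⟩ := exists_mem_shuffles_min_le_descents hdisj l
  refine ⟨⟨C, hC, ?_⟩, fun D hD => ?_⟩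
  · rw [hlen_shuffle C hC, hz']
    exact le_antisymm (descents_cons_le_of_mem_shuffles hC l) hCz
  · rw [hlen_shuffle D hD, hz']
    exact descents_cons_le_of_mem_shuffles hD l

/-- for words `A`, `B` with no common letter, the maximal length of the
descent composition of a shuffle of `A` and `B` is exactly
`ζ(α, β) = min(|α| + ℓ(β), ℓ(α) + |β|)`, and it is attained. -/
theorem shuffle_max_descents (A B : List ℕ) (hA : ∀ x ∈ A, 0 < x) (hB : ∀ x ∈ B, 0 < x)
    (hdisj : ∀ x ∈ A, x ∉ B) (α β : List ℕ) (hα : desComp A = α) (hβ : desComp B = β)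
    (z : ℕ) (hz : z = min (α.sum + β.length) (α.length + β.sum)) :
    (∃ C ∈ shuffles A B, (desComp C).length = z) ∧
    ∀ D ∈ shuffles A B, (desComp D).length ≤ z :=
  shuffle_max_descents_general A B hdisj α β hα hβ z hz

end SlidePaper
end
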